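/- arXiv:2002.03213 — 7 statements merged into one kernel-verified Lean document; each statement's English description precedes it below -/
import Mathlib

section
/- Let K ⊆ ℝ^d be a convex body containing the origin in its interior and let λ > 0. Then K is λ-strongly convex with respect to itself (i.e., for every x, y ∈ K, (x+y)/2 + λ·‖x−y‖_K²·K ⊆ K) if and only if its gauge ‖·‖_K is (2,λ)-convex (i.e., for all x, y with ‖x‖_K ≤ 1 and ‖y‖_K ≤ 1, one has ‖(x+y)/2‖_K ≤ 1 − λ·‖x−y‖_K²). -/
/-!
Since `K` is closed, `K = {z | ‖z‖_K ≤ 1}`, so for each pair it suffices to show that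
`{m} + t • K ⊆ K ↔ ‖m‖_K ≤ 1 - t` for every `m` and `t ≥ 0`.
If `‖m‖_K ≤ 1 - t`, subadditivity of the gauge gives `‖m + t k‖_K ≤ (1 - t) + t = 1`.
Conversely, pick `u` with `‖u‖_K = 1` on the ray of `m` (for `m ≠ 0`, `u = m / ‖m‖_K`,
which needs `K` bounded); then `m + t u = (‖m‖_K + t) u ∈ K` forces `‖m‖_K + t ≤ 1`.
-/

open Pointwise Topology

section

variable {E : Type*} [AddCommGroup E] [Module ℝ E] {K : Set E}

theorem gauge_add_smul_of_eq_gauge_smul {m u : E} {t : ℝ} (ht : 0 ≤ t)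
    (hu : gauge K u = 1) (hm : m = gauge K m • u) : gauge K (m + t • u) = gauge K m + t := by
  have hmu : m + t • u = (gauge K m + t) • u := by rw [add_smul, ← hm]
  rw [hmu, gauge_smul_of_nonneg (add_nonneg (gauge_nonneg m) ht), hu, smul_eq_mul, mul_one]

variable [TopologicalSpace E]

theorem exists_gauge_eq_one_and_eq_gauge_smul [T1Space E] [Nontrivial E]
    (hK : Absorbent ℝ K) (hb : Bornology.IsVonNBounded ℝ K) (m : E) :
    ∃ u, gauge K u = 1 ∧ m = gauge K m • u := by
  have normalize : ∀ w : E, w ≠ 0 →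
      gauge K ((gauge K w)⁻¹ • w) = 1 ∧ w = gauge K w • (gauge K w)⁻¹ • w := by
    intro w hw
    have hpos : 0 < gauge K w := (gauge_pos hK hb).2 hw
    refine ⟨?_, (smul_inv_smul₀ hpos.ne' w).symm⟩
    rw [gauge_smul_of_nonneg (inv_nonneg.2 hpos.le), smul_eq_mul, inv_mul_cancel₀ hpos.ne']
  by_cases hm : m = 0
  · obtain ⟨w, hw⟩ := exists_ne (0 : E)
    exact ⟨_, (normalize w hw).1, by simp [hm]⟩
  · exact ⟨_, normalize m hm⟩

variable [IsTopologicalAddGroup E] [ContinuousSMul ℝ E]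

theorem gauge_le_one_iff_mem_of_isClosed (hc : Convex ℝ K) (hK₀ : K ∈ 𝓝 0)
    (hcl : IsClosed K) {x : E} : gauge K x ≤ 1 ↔ x ∈ K := by
  rw [gauge_le_one_iff_mem_closure hc hK₀, hcl.closure_eq]

theorem add_smul_subset_of_gauge_le_one_sub (hc : Convex ℝ K) (hK₀ : K ∈ 𝓝 0)
    (hcl : IsClosed K) {m : E} {t : ℝ} (ht : 0 ≤ t) (hm : gauge K m ≤ 1 - t) :
    {m} + t • K ⊆ K := by
  rw [Set.singleton_add]
  rintro _ ⟨_, ⟨k, hk, rfl⟩, rfl⟩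
  rw [← gauge_le_one_iff_mem_of_isClosed hc hK₀ hcl]
  calc gauge K (m + t • k) ≤ gauge K m + t * gauge K k := by
        rw [← smul_eq_mul, ← gauge_smul_of_nonneg ht]
        exact gauge_add_le hc (absorbent_nhds_zero hK₀) _ _
    _ ≤ (1 - t) + t * 1 := by gcongr; exact gauge_le_one_of_mem hk
    _ = 1 := by ring

theorem gauge_le_one_sub_of_add_smul_subset [T1Space E] [Nontrivial E] (hc : Convex ℝ K)
    (hK₀ : K ∈ 𝓝 0) (hcl : IsClosed K) (hb : Bornology.IsVonNBounded ℝ K) {m : E} {t : ℝ}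
    (ht : 0 ≤ t) (h : {m} + t • K ⊆ K) : gauge K m ≤ 1 - t := by
  obtain ⟨u, hu, hmu⟩ := exists_gauge_eq_one_and_eq_gauge_smul (absorbent_nhds_zero hK₀) hb m
  have huK : u ∈ K := (gauge_le_one_iff_mem_of_isClosed hc hK₀ hcl).1 hu.le
  have hmem : m + t • u ∈ K := h (Set.add_mem_add rfl (Set.smul_mem_smul_set huK))
  have hle := gauge_le_one_of_mem hmem
  rw [gauge_add_smul_of_eq_gauge_smul ht hu hmu] at hle
  linarith

theorem singleton_add_smul_subset_iff_gauge_le_one_sub [T1Space E] [Nontrivial E]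
    (hc : Convex ℝ K) (hK₀ : K ∈ 𝓝 0) (hcl : IsClosed K) (hb : Bornology.IsVonNBounded ℝ K)
    {m : E} {t : ℝ} (ht : 0 ≤ t) : {m} + t • K ⊆ K ↔ gauge K m ≤ 1 - t :=
  ⟨gauge_le_one_sub_of_add_smul_subset hc hK₀ hcl hb ht,
    add_smul_subset_of_gauge_le_one_sub hc hK₀ hcl ht⟩

end

/-- A convex body `K` with `0` in its interior is `λ`-strongly convex with
respect to itself iff its gauge `‖·‖_K` is `(2,λ)`-convex. -/
theorem strongly_convex_body_iff_two_convex_gauge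
    {d : ℕ} (K : Set (EuclideanSpace ℝ (Fin d))) (lam : ℝ)
    (hKcomp : IsCompact K) (hKconv : Convex ℝ K)
    (h0 : (0 : EuclideanSpace ℝ (Fin d)) ∈ interior K) (hlam : 0 < lam) :
    (∀ x ∈ K, ∀ y ∈ K,
      ({midpoint ℝ x y} : Set (EuclideanSpace ℝ (Fin d)))
        + (lam * gauge K (x - y) ^ 2) • K ⊆ K)
    ↔
    (∀ x y : EuclideanSpace ℝ (Fin d), gauge K x ≤ 1 → gauge K y ≤ 1 →
      gauge K (midpoint ℝ x y) ≤ 1 - lam * gauge K (x - y) ^ 2) := by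
  have hK₀ : K ∈ 𝓝 0 := mem_interior_iff_mem_nhds.mp h0
  have hmem (z : EuclideanSpace ℝ (Fin d)) : gauge K z ≤ 1 ↔ z ∈ K :=
    gauge_le_one_iff_mem_of_isClosed hKconv hK₀ hKcomp.isClosed
  rcases subsingleton_or_nontrivial (EuclideanSpace ℝ (Fin d)) with hE | hE
  · refine iff_of_true (fun _ _ _ _ z _ => ?_) (fun x y hx _ => ?_)
    · rw [Subsingleton.elim z 0]
      exact mem_of_mem_nhds hK₀
    · simpa [Subsingleton.elim y x] using hx
  · have key (x y : EuclideanSpace ℝ (Fin d)) :=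
      singleton_add_smul_subset_iff_gauge_le_one_sub (m := midpoint ℝ x y) hKconv hK₀
        hKcomp.isClosed (hKcomp.isVonNBounded (𝕜 := ℝ))
        (by positivity : 0 ≤ lam * gauge K (x - y) ^ 2)
    simp only [key, ← hmem]
    exact ⟨fun H x y hx hy => H x hx y hy, fun H x hx y hy => H x y hx hy⟩
end

section
/- Let K ⊆ ℝ^d be a convex body containing the origin in its interior and let D > 0. Then the gauge ‖·‖_K is (2,D)-convex if and only if its dual gauge ‖y‖_⋆ := sup{⟨x, y⟩ : ‖x‖_K ≤ 1} is (2, 1/(16D))-smooth. -/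
open Pointwise RealInnerProductSpace

/-- The dual gauge of the gauge of `K`: `‖y‖_⋆ = sup {⟨x, y⟩ : ‖x‖_K ≤ 1}`. -/
noncomputable def dualGauge {d : ℕ} (K : Set (EuclideanSpace ℝ (Fin d)))
    (y : EuclideanSpace ℝ (Fin d)) : ℝ :=
  sSup ((fun x => ⟪x, y⟫) '' {x | gauge K x ≤ 1})

namespace DualGaugeAux

variable {d : ℕ} {K : Set (EuclideanSpace ℝ (Fin d))}

lemma gaugeSet_eq (hKcomp : IsCompact K) (hKconv : Convex ℝ K)
    (h0 : (0 : EuclideanSpace ℝ (Fin d)) ∈ interior K) :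
    {x | gauge K x ≤ 1} = K := by
  ext x
  rw [Set.mem_setOf_eq,
    gauge_le_one_iff_mem_closure hKconv (mem_interior_iff_mem_nhds.mp h0),
    hKcomp.isClosed.closure_eq]

lemma habs (h0 : (0 : EuclideanSpace ℝ (Fin d)) ∈ interior K) : Absorbent ℝ K :=
  absorbent_nhds_zero (mem_interior_iff_mem_nhds.mp h0)

lemma hbdd (hKcomp : IsCompact K) : Bornology.IsVonNBounded ℝ K :=
  hKcomp.totallyBounded.isVonNBounded ℝ

/-- attainment of the dual gauge. -/
lemma attain (hKcomp : IsCompact K) (hKconv : Convex ℝ K)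
    (h0 : (0 : EuclideanSpace ℝ (Fin d)) ∈ interior K)
    (z : EuclideanSpace ℝ (Fin d)) :
    ∃ u ∈ K, (∀ w ∈ K, ⟪w, z⟫ ≤ ⟪u, z⟫) ∧ dualGauge K z = ⟪u, z⟫ := by
  obtain ⟨u, huK, hmax'⟩ := hKcomp.exists_isMaxOn
    (f := fun x : EuclideanSpace ℝ (Fin d) => (⟪x, z⟫ : ℝ)) ⟨0, interior_subset h0⟩
    ((continuous_id.inner continuous_const).continuousOn)
  have hmax : ∀ w ∈ K, ⟪w, z⟫ ≤ ⟪u, z⟫ := fun w hw => hmax' hw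
  refine ⟨u, huK, hmax, ?_⟩
  unfold dualGauge
  rw [gaugeSet_eq hKcomp hKconv h0]
  exact IsGreatest.csSup_eq ⟨⟨u, huK, rfl⟩, by rintro _ ⟨w, hw, rfl⟩; exact hmax w hw⟩

lemma dualGauge_nonneg (hKcomp : IsCompact K) (hKconv : Convex ℝ K)
    (h0 : (0 : EuclideanSpace ℝ (Fin d)) ∈ interior K)
    (z : EuclideanSpace ℝ (Fin d)) : 0 ≤ dualGauge K z := by
  obtain ⟨u, huK, hmax, hval⟩ := attain hKcomp hKconv h0 z
  have := hmax 0 (interior_subset h0)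
  simpa [hval] using this

lemma inner_le_dualGauge (hKcomp : IsCompact K) (hKconv : Convex ℝ K)
    (h0 : (0 : EuclideanSpace ℝ (Fin d)) ∈ interior K)
    {u : EuclideanSpace ℝ (Fin d)} (hu : gauge K u ≤ 1)
    (z : EuclideanSpace ℝ (Fin d)) : ⟪u, z⟫ ≤ dualGauge K z := by
  obtain ⟨m, hmK, hmax, hval⟩ := attain hKcomp hKconv h0 z
  rw [hval]
  have huK : u ∈ K := by rw [← gaugeSet_eq hKcomp hKconv h0]; exact hu
  exact hmax u huK

lemma pairing (hKcomp : IsCompact K) (hKconv : Convex ℝ K)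
    (h0 : (0 : EuclideanSpace ℝ (Fin d)) ∈ interior K)
    (a z : EuclideanSpace ℝ (Fin d)) : ⟪a, z⟫ ≤ gauge K a * dualGauge K z := by
  rcases eq_or_ne a 0 with rfl | ha
  · simp [gauge_zero]
  · have hg : 0 < gauge K a := (gauge_pos (habs h0) (hbdd hKcomp)).2 ha
    set b := (gauge K a)⁻¹ • a with hb
    have hgb : gauge K b ≤ 1 := by
      rw [hb, gauge_smul_of_nonneg (inv_nonneg.2 hg.le), smul_eq_mul,
        inv_mul_cancel₀ hg.ne']
    have h1 : ⟪b, z⟫ ≤ dualGauge K z := inner_le_dualGauge hKcomp hKconv h0 hgb z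
    have h2 : ⟪a, z⟫ = gauge K a * ⟪b, z⟫ := by
      rw [hb, real_inner_smul_left]
      field_simp
    rw [h2]
    exact mul_le_mul_of_nonneg_left h1 hg.le

lemma dualGauge_smul (hKcomp : IsCompact K) (hKconv : Convex ℝ K)
    (h0 : (0 : EuclideanSpace ℝ (Fin d)) ∈ interior K)
    {a : ℝ} (ha : 0 ≤ a) (z : EuclideanSpace ℝ (Fin d)) :
    dualGauge K (a • z) = a * dualGauge K z := by
  obtain ⟨u, huK, hmax, hval⟩ := attain hKcomp hKconv h0 z
  rw [hval]
  unfold dualGauge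
  rw [gaugeSet_eq hKcomp hKconv h0]
  refine IsGreatest.csSup_eq ⟨⟨u, huK, ?_⟩, ?_⟩
  · show ⟪u, a • z⟫ = a * ⟪u, z⟫
    rw [real_inner_smul_right]
  · rintro _ ⟨w, hw, rfl⟩
    show ⟪w, a • z⟫ ≤ a * ⟪u, z⟫
    rw [real_inner_smul_right]
    exact mul_le_mul_of_nonneg_left (hmax w hw) ha

/-- separation: approximate attainment of the gauge as sup of pairings against
dual unit vectors. -/
lemma sep (hKcomp : IsCompact K) (hKconv : Convex ℝ K)
    (h0 : (0 : EuclideanSpace ℝ (Fin d)) ∈ interior K)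
    {c : ℝ} (hc0 : 0 < c) {w : EuclideanSpace ℝ (Fin d)} (hcg : c < gauge K w) :
    ∃ x₀, dualGauge K x₀ = 1 ∧ c < ⟪w, x₀⟫ := by
  have hwK : w ∉ c • K := fun h => absurd (gauge_le_of_mem hc0.le h) (not_le.2 hcg)
  have hscomp : IsCompact (c • K) := hKcomp.smul c
  obtain ⟨f, t, hft, htw⟩ :=
    geometric_hahn_banach_closed_point (hKconv.smul c) hscomp.isClosed hwK
  set y' := (InnerProductSpace.toDual ℝ (EuclideanSpace ℝ (Fin d))).symm f with hy'def
  have hy' : ∀ x, ⟪x, y'⟫ = f x := fun x => by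
    rw [real_inner_comm]; exact InnerProductSpace.toDual_symm_apply
  have ht0 : 0 < t := by
    have h0c : (0 : EuclideanSpace ℝ (Fin d)) ∈ c • K :=
      ⟨0, interior_subset h0, smul_zero c⟩
    have := hft 0 h0c
    simpa using this
  have hy'ne : y' ≠ 0 := by
    intro h
    have : ⟪w, y'⟫ = f w := hy' w
    rw [h, inner_zero_right] at this
    linarith [htw, ht0, this.symm]
  obtain ⟨u, huK, hmax, hval⟩ := attain hKcomp hKconv h0 y'
  -- s' > 0
  obtain ⟨ε, hε, hball⟩ : ∃ ε > 0, Metric.ball (0 : EuclideanSpace ℝ (Fin d)) ε ⊆ K := by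
    rcases Metric.mem_nhds_iff.mp (mem_interior_iff_mem_nhds.mp h0) with ⟨ε, hε, hb⟩
    exact ⟨ε, hε, hb⟩
  have hs'pos : 0 < dualGauge K y' := by
    set p := (ε / 2) • ‖y'‖⁻¹ • y' with hp
    have hyn : 0 < ‖y'‖ := norm_pos_iff.2 hy'ne
    have hpK : p ∈ K := by
      apply hball
      rw [Metric.mem_ball, dist_zero_right, hp, norm_smul, norm_smul, norm_inv,
        norm_norm, inv_mul_cancel₀ hyn.ne', mul_one, Real.norm_eq_abs,
        abs_of_pos (by linarith)]
      linarith
    have hip : ⟪p, y'⟫ = (ε / 2) * ‖y'‖ := by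
      rw [hp, real_inner_smul_left, real_inner_smul_left, real_inner_self_eq_norm_sq]
      field_simp
    have h1 : ⟪p, y'⟫ ≤ dualGauge K y' :=
      inner_le_dualGauge hKcomp hKconv h0 (gauge_le_one_of_mem hpK) y'
    rw [hip] at h1
    nlinarith
  have hcs' : c * dualGauge K y' < t := by
    have h := hft (c • u) ⟨u, huK, rfl⟩
    rw [map_smul, smul_eq_mul] at h
    rw [hval, hy' u]
    exact h
  refine ⟨(dualGauge K y')⁻¹ • y', ?_, ?_⟩
  · rw [dualGauge_smul hKcomp hKconv h0 (inv_nonneg.2 hs'pos.le),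
      inv_mul_cancel₀ hs'pos.ne']
  · rw [real_inner_smul_right]
    have h1 : t < ⟪w, y'⟫ := by rw [hy' w]; exact htw
    have h2 : c < (dualGauge K y')⁻¹ * t := by
      rw [lt_inv_mul_iff₀ hs'pos]
      linarith [hcs', mul_comm c (dualGauge K y')]
    calc c < (dualGauge K y')⁻¹ * t := h2
      _ < (dualGauge K y')⁻¹ * ⟪w, y'⟫ :=
          (mul_lt_mul_iff_right₀ (inv_pos.2 hs'pos)).2 h1
end DualGaugeAux

/-- The gauge `‖·‖_K` of a convex body `K` with `0` in its interior is
`(2,D)`-convex iff its dual gauge is `(2, 1/(16D))`-smooth. -/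
theorem two_convex_iff_dual_two_smooth
    {d : ℕ} (K : Set (EuclideanSpace ℝ (Fin d))) (D : ℝ)
    (hKcomp : IsCompact K) (hKconv : Convex ℝ K)
    (h0 : (0 : EuclideanSpace ℝ (Fin d)) ∈ interior K) (hD : 0 < D) :
    (∀ x y : EuclideanSpace ℝ (Fin d), gauge K x ≤ 1 → gauge K y ≤ 1 →
      gauge K (midpoint ℝ x y) ≤ 1 - D * gauge K (x - y) ^ 2)
    ↔
    (∀ x : EuclideanSpace ℝ (Fin d), dualGauge K x = 1 →
      ∀ y : EuclideanSpace ℝ (Fin d),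
        (dualGauge K (x + y) + dualGauge K (x - y)) / 2
          ≤ 1 + (1 / (16 * D)) * dualGauge K y ^ 2) := by
  open DualGaugeAux in
  constructor
  · -- convex → dual smooth
    intro hconv x hx y
    obtain ⟨u, huK, humax, hux⟩ := attain hKcomp hKconv h0 (x + y)
    obtain ⟨v, hvK, hvmax, hvx⟩ := attain hKcomp hKconv h0 (x - y)
    have hu1 : gauge K u ≤ 1 := gauge_le_one_of_mem huK
    have hv1 : gauge K v ≤ 1 := gauge_le_one_of_mem hvK
    set t := gauge K (u - v) with htdef
    set s := dualGauge K y with hsdef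
    have ht0 : 0 ≤ t := gauge_nonneg _
    have hs0 : 0 ≤ s := dualGauge_nonneg hKcomp hKconv h0 y
    have hinner : ⟪u, x + y⟫ + ⟪v, x - y⟫ = ⟪u + v, x⟫ + ⟪u - v, y⟫ := by
      simp only [inner_add_right, inner_sub_right, inner_add_left, inner_sub_left]
      ring
    have hp1 : ⟪u + v, x⟫ ≤ gauge K (u + v) := by
      have := pairing hKcomp hKconv h0 (u + v) x
      rwa [hx, mul_one] at this
    have hp2 : ⟪u - v, y⟫ ≤ t * s := pairing hKcomp hKconv h0 (u - v) y
    have hmid : gauge K (u + v) = 2 * gauge K (midpoint ℝ u v) := by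
      rw [midpoint_eq_smul_add, invOf_eq_inv,
        gauge_smul_of_nonneg (by norm_num : (0:ℝ) ≤ (2:ℝ)⁻¹)]
      simp
    have hc := hconv u v hu1 hv1
    have hG : gauge K (u + v) ≤ 2 - 2 * D * t ^ 2 := by
      rw [hmid]; linarith
    have hA : dualGauge K (x + y) + dualGauge K (x - y) ≤ 2 - 2 * D * t ^ 2 + t * s := by
      rw [hux, hvx]
      linarith [hinner, hp1, hp2, hG]
    have hts : t * s ≤ 2 * D * t ^ 2 + s ^ 2 / (8 * D) := by
      rw [← sub_nonneg]
      have h8 : (8 : ℝ) * D ≠ 0 := by positivity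
      have heq : 2 * D * t ^ 2 + s ^ 2 / (8 * D) - t * s = (4 * D * t - s) ^ 2 / (8 * D) := by
        field_simp
        ring
      rw [heq]
      positivity
    have hhalf : s ^ 2 / (8 * D) / 2 = 1 / (16 * D) * s ^ 2 := by
      rw [div_div, one_div, inv_mul_eq_div]
      ring
    linarith [hA, hts]
  · -- dual smooth → convex
    intro hsm u v hu hv
    set w := u - v with hwdef
    set g := gauge K w with hgdef
    have hg0 : 0 ≤ g := gauge_nonneg _
    rcases eq_or_lt_of_le hg0 with hg | hg
    · -- g = 0
      rw [← hg]
      have : gauge K (midpoint ℝ u v) ≤ 1 := by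
        rw [midpoint_eq_smul_add, invOf_eq_inv,
          gauge_smul_of_nonneg (by norm_num : (0:ℝ) ≤ (2:ℝ)⁻¹), smul_eq_mul]
        have := gauge_add_le hKconv (habs h0) u v
        nlinarith [this]
      simpa using this
    · -- g > 0
      set w' := midpoint ℝ u v with hw'def
      have claimC : ∀ c, 0 < c → c < g → ∀ x, dualGauge K x = 1 →
          ⟪w', x⟫ ≤ 1 + D * g ^ 2 - 2 * D * g * c := by
        intro c hc0 hcg x hx
        obtain ⟨y₀, hy₀1, hy₀c⟩ := sep hKcomp hKconv h0 hc0 hcg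
        set y := (4 * D * g) • y₀ with hydef
        have h4Dg : 0 < 4 * D * g := by positivity
        have hyg : dualGauge K y = 4 * D * g := by
          rw [hydef, dualGauge_smul hKcomp hKconv h0 h4Dg.le, hy₀1, mul_one]
        have h1 : ⟪u, x + y⟫ ≤ dualGauge K (x + y) :=
          inner_le_dualGauge hKcomp hKconv h0 hu _
        have h2 : ⟪v, x - y⟫ ≤ dualGauge K (x - y) :=
          inner_le_dualGauge hKcomp hKconv h0 hv _
        have hsum := hsm x hx y
        rw [hyg] at hsum
        have hwy : 4 * D * g * c ≤ ⟪w, y⟫ := by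
          rw [hydef, real_inner_smul_right]
          exact mul_le_mul_of_nonneg_left hy₀c.le h4Dg.le
        have hid : ⟪w', x⟫ = (⟪u, x + y⟫ + ⟪v, x - y⟫) / 2 - ⟪w, y⟫ / 2 := by
          rw [hw'def, hwdef, midpoint_eq_smul_add, invOf_eq_inv]
          simp only [inner_add_right, inner_sub_right, inner_add_left, inner_sub_left,
            real_inner_smul_left]
          ring
        have hDg : 1 / (16 * D) * (4 * D * g) ^ 2 = D * g ^ 2 := by
          have h16 : (16 : ℝ) * D ≠ 0 := by positivity
          have he : (4 * D * g) ^ 2 = 16 * D * (D * g ^ 2) := by ring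
          rw [he, one_div, inv_mul_cancel_left₀ h16]
        rw [hDg] at hsum
        rw [hid]
        linarith
      have claimD : ∀ c, 0 < c → c < g → gauge K w' ≤ 1 + D * g ^ 2 - 2 * D * g * c := by
        intro c hc0 hcg
        rcases eq_or_lt_of_le (gauge_nonneg w' : (0:ℝ) ≤ gauge K w') with hw0 | hwpos
        · rw [← hw0]
          have hw'eq : w' = 0 := by
            have := (gauge_eq_zero (habs h0) (hbdd hKcomp)).1 hw0.symm
            exact this
          obtain ⟨y₀, hy₀1, _⟩ := sep hKcomp hKconv h0 hc0 hcg
          have := claimC c hc0 hcg y₀ hy₀1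
          rw [hw'eq, inner_zero_left] at this
          linarith
        · apply le_of_forall_lt
          intro c' hc'
          rcases le_or_gt c' 0 with hc'0 | hc'0
          · obtain ⟨x₀, hx₀1, hx₀c⟩ := sep hKcomp hKconv h0 (half_pos hwpos)
              (half_lt_self hwpos)
            have := claimC c hc0 hcg x₀ hx₀1
            linarith [half_pos hwpos]
          · obtain ⟨x₀, hx₀1, hx₀c⟩ := sep hKcomp hKconv h0 hc'0 hc'
            have := claimC c hc0 hcg x₀ hx₀1
            linarith
      -- take c → g
      have h2Dg : 0 < 2 * D * g := by positivity
      set A := gauge K w' with hAdef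
      set B := 1 + D * g ^ 2 - A with hBdef
      have hgle : ∀ c, 0 < c → c < g → c ≤ B / (2 * D * g) := by
        intro c hc0 hcg
        rw [le_div_iff₀ h2Dg]
        have := claimD c hc0 hcg
        nlinarith
      have hgB : g ≤ B / (2 * D * g) := by
        by_contra h
        push_neg at h
        set M := max (B / (2 * D * g)) 0 with hM
        have hMg : M < g := max_lt h hg
        set c := (M + g) / 2 with hc
        have hc0 : 0 < c := by
          have : (0:ℝ) ≤ M := le_max_right _ _
          rw [hc]; linarith
        have hcg : c < g := by rw [hc]; linarith
        have hMc : M < c := by rw [hc]; linarith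
        have := hgle c hc0 hcg
        have hBM : B / (2 * D * g) ≤ M := le_max_left _ _
        linarith
      have hfin : g * (2 * D * g) ≤ B := (le_div_iff₀ h2Dg).1 hgB
      rw [hBdef] at hfin
      nlinarith [hfin]
end

section
/- Let ‖·‖ be a gauge on ℝ^d that is (2,D)-smooth with D > 0. Then there exist constants c > 0 and ε₀ > 0, depending only on the gauge and on D, such that the following holds for every ε ∈ (0, ε₀): if Z is a random vector in ℝ^d with atomless distribution satisfying ‖Z‖ ≤ ε almost surely, and the function ‖x‖_ε := E‖x + ‖x‖₂·Z‖ satisfies (1−ε)‖x‖ ≤ ‖x‖_ε ≤ (1+ε)‖x‖ for all x ∈ ℝ^d, then the gauge ‖·‖_ε is (2, D(1+cε))-smooth. -/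
/-!
For `a = (‖x + y‖ + ‖x - y‖) / 2` and `b = (‖x + y‖ - ‖x - y‖) / 2` one has
`x ± y + ‖x ± y‖ • Z = (x + a • Z) ± (y + b • Z)`, so the smoothness of the gauge applies
pointwise to `u = x + a • Z` and `v = y + b • Z` before taking expectations. Since the Euclidean
norm is itself smooth, `a - ‖x‖ ≤ ‖y‖² / (2‖x‖)`, so `u` differs from `x + ‖x‖ • Z` by
`O(ε ‖y‖²)`; and as `|b| ≤ ‖y‖`, the Lipschitz gauge sees `u` and `v` as `O(ε)`-perturbations of
`x` and `y`. This gives the modulus `D (1 + O(ε))` as long as `y` stays bounded; for large `y`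
the triangle inequality suffices, because the quadratic term `D ‖y‖²` dominates.
-/

open Pointwise MeasureTheory

open Topology
open scoped NNReal

def TwoSmoothWith {E : Type*} [AddGroup E] (D : ℝ) (f : E → ℝ) : Prop :=
  ∀ x, f x = 1 → ∀ y, (f (x + y) + f (x - y)) / 2 ≤ 1 + D * f y ^ 2

noncomputable def smoothedGauge {E Ω : Type*} [NormedAddCommGroup E] [NormedSpace ℝ E]
    [MeasurableSpace Ω] (K : Set E) (μ : Measure Ω) (Z : Ω → E) (x : E) : ℝ :=
  ∫ ω, gauge K (x + ‖x‖ • Z ω) ∂μ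

theorem one_sub_le_and_le_two_of_mul_le_of_le_mul {ε t : ℝ} (hε : 0 ≤ ε) (hε2 : ε ≤ 1 / 2)
    (h₁ : (1 - ε) * t ≤ 1) (h₂ : 1 ≤ (1 + ε) * t) : 1 - ε ≤ t ∧ t ≤ 2 := by
  have ht : 0 ≤ t := by nlinarith
  constructor <;> nlinarith

theorem exists_add_mul_sq_div_le {A C D : ℝ} (hA : 0 ≤ A) (hC : 0 ≤ C) (hD : 0 < D) :
    ∃ c > 0, ∃ ε₀ > 0, ∀ ε, 0 < ε → ε < ε₀ →
      A * ε + D * (1 + A * ε) ^ 2 / (1 - C * ε) ≤ D * (1 + c * ε) * (1 - ε) ^ 2 := by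
  set P := (2 * A + A ^ 2) * (1 + 2 * C) + 2 * C
  set Q := A / D + P
  have hQ : 0 ≤ Q := by positivity
  refine ⟨2 * (Q + 2), by positivity, 1 / (2 * C + 4), by positivity, fun ε hε hεε₀ => ?_⟩
  rw [lt_div_iff₀ (by positivity)] at hεε₀
  have hε4 : ε ≤ 1 / 4 := by nlinarith
  have hCε : 2 * C * ε ≤ 1 := by nlinarith
  have hden : 0 < 1 - C * ε := by nlinarith
  have hsq : (1 + A * ε) ^ 2 ≤ 1 + (2 * A + A ^ 2) * ε := by
    nlinarith [mul_le_mul_of_nonneg_left (by nlinarith : ε ^ 2 ≤ ε) (sq_nonneg A)]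
  have hinv : 1 / (1 - C * ε) ≤ 1 + 2 * C * ε := by
    rw [div_le_iff₀ hden]; nlinarith [mul_nonneg hC hε.le]
  have hquot : (1 + A * ε) ^ 2 / (1 - C * ε) ≤ 1 + P * ε := by
    calc (1 + A * ε) ^ 2 / (1 - C * ε) = (1 + A * ε) ^ 2 * (1 / (1 - C * ε)) := by ring
      _ ≤ (1 + (2 * A + A ^ 2) * ε) * (1 + 2 * C * ε) := by gcongr
      _ ≤ 1 + P * ε := by
        simp only [P]
        nlinarith [mul_le_mul_of_nonneg_left (by linarith : ε ≤ 1)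
          (by positivity : 0 ≤ 2 * C * (2 * A + A ^ 2) * ε)]
  have hexpand : 1 + Q * ε ≤ (1 + 2 * (Q + 2) * ε) * (1 - ε) ^ 2 := by
    nlinarith [mul_nonneg (by positivity : 0 ≤ 1 + 2 * (Q + 2) * ε) (sq_nonneg ε),
      mul_le_mul_of_nonneg_left hε4 (by positivity : 0 ≤ 2 * (Q + 2) * ε)]
  calc A * ε + D * (1 + A * ε) ^ 2 / (1 - C * ε)
      = D * (A / D * ε + (1 + A * ε) ^ 2 / (1 - C * ε)) := by field_simp
    _ ≤ D * (A / D * ε + (1 + P * ε)) := by gcongr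
    _ = D * (1 + Q * ε) := by ring
    _ ≤ D * ((1 + 2 * (Q + 2) * ε) * (1 - ε) ^ 2) := by gcongr
    _ = _ := by ring

theorem two_mul_norm_le_norm_add_add_norm_sub {E : Type*} [NormedAddCommGroup E] [NormedSpace ℝ E]
    (x y : E) : 2 * ‖x‖ ≤ ‖x + y‖ + ‖x - y‖ := by
  have h := norm_add_le (x + y) (x - y)
  rwa [add_add_sub_cancel, ← two_smul ℝ x, norm_smul, Real.norm_two] at h

theorem abs_norm_add_sub_norm_sub_le {E : Type*} [NormedAddCommGroup E] [NormedSpace ℝ E]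
    (x y : E) : |‖x + y‖ - ‖x - y‖| ≤ 2 * ‖y‖ := by
  have h := abs_norm_sub_norm_le (x + y) (x - y)
  rwa [add_sub_sub_cancel, ← two_smul ℝ y, norm_smul, Real.norm_two] at h

theorem norm_mul_norm_add_add_norm_sub_le {F : Type*} [NormedAddCommGroup F]
    [InnerProductSpace ℝ F] (x y : F) : ‖x‖ * (‖x + y‖ + ‖x - y‖) ≤ 2 * ‖x‖ ^ 2 + ‖y‖ ^ 2 := by
  nlinarith [parallelogram_law_with_norm ℝ x y, sq_nonneg (‖x‖ - ‖x + y‖),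
    sq_nonneg (‖x‖ - ‖x - y‖)]

section Gauge

variable {E : Type*} [NormedAddCommGroup E] [NormedSpace ℝ E] {K : Set E}

theorem gauge_add_smul_le (hKc : Convex ℝ K) (hK : Absorbent ℝ K) (u z : E) {t : ℝ}
    (ht : 0 ≤ t) : gauge K (u + t • z) ≤ gauge K u + t * gauge K z := by
  simpa only [gauge_smul_of_nonneg ht, smul_eq_mul] using gauge_add_le hKc hK u (t • z)

theorem gauge_le_mul_norm {L : ℝ≥0} (hL : LipschitzWith L (gauge K)) (v : E) :
    gauge K v ≤ L * ‖v‖ := by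
  simpa only [gauge_zero, zero_add, dist_zero_right] using hL.le_add_mul v 0

theorem gauge_neg_le_mul_gauge {L : ℝ≥0} {R : ℝ} (hL : LipschitzWith L (gauge K))
    (hR : ∀ v : E, ‖v‖ ≤ R * gauge K v) (v : E) : gauge K (-v) ≤ L * R * gauge K v :=
  calc gauge K (-v) ≤ L * ‖v‖ := norm_neg v ▸ gauge_le_mul_norm hL (-v)
    _ ≤ L * R * gauge K v := by rw [mul_assoc]; exact mul_le_mul_of_nonneg_left (hR v) L.2

theorem exists_norm_le_mul_gauge (hb : Bornology.IsBounded K) (hK : Absorbent ℝ K) :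
    ∃ R ≥ 0, ∀ v : E, ‖v‖ ≤ R * gauge K v := by
  obtain ⟨R, hR0, hKR⟩ := hb.subset_closedBall_lt 0 0
  exact ⟨R, hR0.le, fun v => (div_le_iff₀' hR0).1 (le_gauge_of_subset_closedBall hK hR0.le hKR)⟩

theorem TwoSmoothWith.gauge_add_add_gauge_sub_le {D : ℝ} (hsm : TwoSmoothWith D (gauge K))
    {u : E} (hu : 0 < gauge K u) (v : E) :
    gauge K (u + v) + gauge K (u - v) ≤ 2 * gauge K u + 2 * D * gauge K v ^ 2 / gauge K u := by
  have hinv : 0 ≤ (gauge K u)⁻¹ := inv_nonneg.2 hu.le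
  have hunit : gauge K ((gauge K u)⁻¹ • u) = 1 := by
    rw [gauge_smul_of_nonneg hinv, smul_eq_mul, inv_mul_cancel₀ hu.ne']
  have h := hsm _ hunit ((gauge K u)⁻¹ • v)
  rw [← smul_add, ← smul_sub, gauge_smul_of_nonneg hinv, gauge_smul_of_nonneg hinv,
    gauge_smul_of_nonneg hinv] at h
  simp only [smul_eq_mul] at h
  field_simp at h ⊢
  linarith

theorem gauge_add_norm_smul_add_gauge_sub_norm_smul_le (hKc : Convex ℝ K) (hK : Absorbent ℝ K)
    {D : ℝ} (hsm : TwoSmoothWith D (gauge K)) (hD : 0 ≤ D) {L : ℝ≥0}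
    (hL : LipschitzWith L (gauge K)) {x y z : E} {ε ρ : ℝ} (hz : gauge K z ≤ ε) (hzρ : ‖z‖ ≤ ρ)
    (hpos : 0 < gauge K x - L * ((‖x + y‖ + ‖x - y‖) / 2) * ρ) :
    gauge K (x + y + ‖x + y‖ • z) + gauge K (x - y + ‖x - y‖ • z) ≤
      2 * gauge K (x + ‖x‖ • z) + (‖x + y‖ + ‖x - y‖ - 2 * ‖x‖) * ε +
        2 * D * (gauge K y + L * ‖y‖ * ρ) ^ 2 /
          (gauge K x - L * ((‖x + y‖ + ‖x - y‖) / 2) * ρ) := by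
  set a := (‖x + y‖ + ‖x - y‖) / 2
  set b := (‖x + y‖ - ‖x - y‖) / 2
  have hxa : ‖x‖ ≤ a := by
    simp only [a]; linarith [two_mul_norm_le_norm_add_add_norm_sub x y]
  have hby : |b| ≤ ‖y‖ := by
    rw [abs_div, abs_two]; linarith [abs_norm_add_sub_norm_sub_le x y]
  have hρ : 0 ≤ ρ := (norm_nonneg z).trans hzρ
  have hupper : gauge K (x + a • z) ≤ gauge K (x + ‖x‖ • z) + (a - ‖x‖) * ε := by
    have h := gauge_add_smul_le hKc hK (x + ‖x‖ • z) z (sub_nonneg.2 hxa)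
    rw [add_assoc, ← add_smul, add_sub_cancel] at h
    exact h.trans (by gcongr)
  have hlower : gauge K x - L * a * ρ ≤ gauge K (x + a • z) := by
    have h := hL.le_add_mul x (x + a • z)
    rw [dist_self_add_right, norm_smul, Real.norm_of_nonneg ((norm_nonneg x).trans hxa)] at h
    nlinarith [mul_le_mul_of_nonneg_left hzρ ((norm_nonneg x).trans hxa), L.2]
  have hshift : gauge K (y + b • z) ≤ gauge K y + L * ‖y‖ * ρ := by
    have h := hL.le_add_mul (y + b • z) y
    rw [dist_self_add_left, norm_smul, Real.norm_eq_abs] at h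
    nlinarith [mul_le_mul hby hzρ (norm_nonneg z) (norm_nonneg y), L.2]
  have hsplit_add : x + y + ‖x + y‖ • z = (x + a • z) + (y + b • z) := by
    simp only [a, b]; module
  have hsplit_sub : x - y + ‖x - y‖ • z = (x + a • z) - (y + b • z) := by
    simp only [a, b]; module
  rw [hsplit_add, hsplit_sub]
  calc _ ≤ 2 * gauge K (x + a • z) + 2 * D * gauge K (y + b • z) ^ 2 / gauge K (x + a • z) :=
        hsm.gauge_add_add_gauge_sub_le (hpos.trans_le hlower) _
    _ ≤ 2 * (gauge K (x + ‖x‖ • z) + (a - ‖x‖) * ε) +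
          2 * D * (gauge K y + L * ‖y‖ * ρ) ^ 2 / (gauge K x - L * a * ρ) := by
        gcongr
        exact gauge_nonneg _
    _ = _ := by ring

theorem smoothness_ineq_of_large_gauge (hKc : Convex ℝ K) (hK : Absorbent ℝ K) {M D c ε : ℝ}
    (hM : ∀ v, gauge K (-v) ≤ M * gauge K v) (hD : 0 ≤ D) (hc : 0 ≤ c) (hε : 0 ≤ ε)
    (hε2 : ε ≤ 1 / 2) {N : E → ℝ}
    (hN : ∀ v, (1 - ε) * gauge K v ≤ N v ∧ N v ≤ (1 + ε) * gauge K v) {x y : E} (hx : N x = 1)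
    (hy : 1 ≤ gauge K y) (hyD : 8 + 3 * (1 + M) ≤ D * gauge K y) :
    (N (x + y) + N (x - y)) / 2 ≤ 1 + D * (1 + c * ε) * N y ^ 2 := by
  have hgx := (one_sub_le_and_le_two_of_mul_le_of_le_mul hε hε2 (hx ▸ (hN x).1)
    (hx ▸ (hN x).2)).2
  have hadd : N (x + y) ≤ 3 / 2 * (gauge K x + gauge K y) :=
    (hN _).2.trans (mul_le_mul (by linarith) (gauge_add_le hKc hK x y) (gauge_nonneg _)
      (by norm_num))
  have hsub : N (x - y) ≤ 3 / 2 * (gauge K x + M * gauge K y) := by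
    refine (hN _).2.trans (mul_le_mul (by linarith) ?_ (gauge_nonneg _) (by norm_num))
    rw [sub_eq_add_neg]
    exact (gauge_add_le hKc hK x (-y)).trans (by gcongr; exact hM y)
  have hNy : (gauge K y / 2) ^ 2 ≤ N y ^ 2 :=
    pow_le_pow_left₀ (by positivity) (le_trans (by nlinarith) (hN y).1) 2
  nlinarith [mul_le_mul_of_nonneg_right hyD (gauge_nonneg (s := K) y),
    mul_nonneg (mul_nonneg hD (mul_nonneg hc hε)) (sq_nonneg (N y))]

end Gauge

section Smoothing

variable {E Ω : Type*} [NormedAddCommGroup E] [MeasurableSpace E] [OpensMeasurableSpace E]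
  [MeasurableSpace Ω] {K : Set E} {μ : Measure Ω} {Z : Ω → E} {D ε : ℝ} {L : ℝ≥0}

theorem integrable_gauge_add_smul [NormedSpace ℝ E] [IsFiniteMeasure μ] (hKc : Convex ℝ K)
    (hK0 : K ∈ 𝓝 0) (hZ : Measurable Z) (hZε : ∀ᵐ ω ∂μ, gauge K (Z ω) ≤ ε) (v : E) {t : ℝ}
    (ht : 0 ≤ t) :
    Integrable (fun ω => gauge K (v + t • Z ω)) μ := by
  have hmeas : Measurable fun z : E => gauge K (v + t • z) :=
    ((continuous_gauge hKc hK0).comp (by fun_prop)).measurable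
  refine (integrable_const (gauge K v + t * ε)).mono' (hmeas.comp hZ).aestronglyMeasurable ?_
  filter_upwards [hZε] with ω hω
  rw [Real.norm_of_nonneg (gauge_nonneg _)]
  exact (gauge_add_smul_le hKc (absorbent_nhds_zero hK0) v (Z ω) ht).trans (by gcongr)

theorem smoothedGauge_add_add_smoothedGauge_sub_le [NormedSpace ℝ E] [IsProbabilityMeasure μ]
    (hKc : Convex ℝ K) (hK0 : K ∈ 𝓝 0)
    (hsm : TwoSmoothWith D (gauge K)) (hD : 0 ≤ D) (hL : LipschitzWith L (gauge K))
    (hZ : Measurable Z) (hZε : ∀ᵐ ω ∂μ, gauge K (Z ω) ≤ ε) {ρ : ℝ} (hZρ : ∀ᵐ ω ∂μ, ‖Z ω‖ ≤ ρ)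
    {x y : E} (hpos : 0 < gauge K x - L * ((‖x + y‖ + ‖x - y‖) / 2) * ρ) :
    smoothedGauge K μ Z (x + y) + smoothedGauge K μ Z (x - y) ≤
      2 * smoothedGauge K μ Z x + (‖x + y‖ + ‖x - y‖ - 2 * ‖x‖) * ε +
        2 * D * (gauge K y + L * ‖y‖ * ρ) ^ 2 /
          (gauge K x - L * ((‖x + y‖ + ‖x - y‖) / 2) * ρ) := by
  set B := (‖x + y‖ + ‖x - y‖ - 2 * ‖x‖) * ε + 2 * D * (gauge K y + L * ‖y‖ * ρ) ^ 2 /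
    (gauge K x - L * ((‖x + y‖ + ‖x - y‖) / 2) * ρ)
  have hint := integrable_gauge_add_smul hKc hK0 hZ hZε (μ := μ)
  have hpointwise : ∀ᵐ ω ∂μ, gauge K (x + y + ‖x + y‖ • Z ω) + gauge K (x - y + ‖x - y‖ • Z ω)
      ≤ 2 * gauge K (x + ‖x‖ • Z ω) + B := by
    filter_upwards [hZε, hZρ] with ω hε hρ
    exact (gauge_add_norm_smul_add_gauge_sub_norm_smul_le hKc (absorbent_nhds_zero hK0) hsm hD
      hL hε hρ hpos).trans_eq (add_assoc _ _ _)
  calc smoothedGauge K μ Z (x + y) + smoothedGauge K μ Z (x - y)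
      = ∫ ω, gauge K (x + y + ‖x + y‖ • Z ω) + gauge K (x - y + ‖x - y‖ • Z ω) ∂μ :=
        (integral_add (hint _ (norm_nonneg _)) (hint _ (norm_nonneg _))).symm
    _ ≤ ∫ ω, 2 * gauge K (x + ‖x‖ • Z ω) + B ∂μ :=
        integral_mono_ae ((hint _ (norm_nonneg _)).add (hint _ (norm_nonneg _)))
          (((hint _ (norm_nonneg _)).const_mul 2).add (integrable_const B)) hpointwise
    _ = 2 * smoothedGauge K μ Z x + B := by
        rw [integral_add ((hint _ (norm_nonneg _)).const_mul 2) (integrable_const B),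
          integral_const_mul, integral_const, probReal_univ, one_smul]
        rfl
    _ = _ := (add_assoc _ _ _).symm

theorem smoothedGauge_smoothness_ineq_of_gauge_le [InnerProductSpace ℝ E] [IsProbabilityMeasure μ]
    (hKc : Convex ℝ K) (hK0 : K ∈ 𝓝 0)
    (hsm : TwoSmoothWith D (gauge K)) (hD : 0 ≤ D) (hL : LipschitzWith L (gauge K)) {R : ℝ}
    (hR : ∀ v, ‖v‖ ≤ R * gauge K v) (hR0 : 0 ≤ R) (hZ : Measurable Z)
    (hZε : ∀ᵐ ω ∂μ, gauge K (Z ω) ≤ ε) (hε : 0 ≤ ε)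
    (hN : ∀ v, (1 - ε) * gauge K v ≤ smoothedGauge K μ Z v ∧
      smoothedGauge K μ Z v ≤ (1 + ε) * gauge K v)
    {G c : ℝ} (hCε : (1 + L * R ^ 2 * (2 + G)) * ε ≤ 1 / 2) (hc0 : 0 ≤ c)
    (hc : L * R ^ 2 * ε + D * (1 + L * R ^ 2 * ε) ^ 2 / (1 - (1 + L * R ^ 2 * (2 + G)) * ε) ≤
      D * (1 + c * ε) * (1 - ε) ^ 2)
    {x y : E} (hx : smoothedGauge K μ Z x = 1) (hy : gauge K y ≤ G) :
    (smoothedGauge K μ Z (x + y) + smoothedGauge K μ Z (x - y)) / 2 ≤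
      1 + D * (1 + c * ε) * smoothedGauge K μ Z y ^ 2 := by
  set A : ℝ := L * R ^ 2
  set C : ℝ := 1 + A * (2 + G)
  set s := ‖x + y‖ + ‖x - y‖
  have hγ : 0 ≤ gauge K y := gauge_nonneg y
  have hAG : 0 ≤ A * (2 + G) := mul_nonneg (by positivity) (by linarith)
  have hε2 : ε ≤ 1 / 2 := by nlinarith
  obtain ⟨hgx₁, hgx₂⟩ := one_sub_le_and_le_two_of_mul_le_of_le_mul hε hε2 (hx ▸ (hN x).1)
    (hx ▸ (hN x).2)
  have hxL : 1 ≤ 2 * L * ‖x‖ := by nlinarith [gauge_le_mul_norm hL x]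
  have hs2x : 2 * ‖x‖ ≤ s := two_mul_norm_le_norm_add_add_norm_sub x y
  have hs_sub : s - 2 * ‖x‖ ≤ 2 * A * gauge K y ^ 2 := by
    nlinarith [norm_mul_norm_add_add_norm_sub_le x y,
      mul_le_mul_of_nonneg_right hxL (sub_nonneg.2 hs2x),
      pow_le_pow_left₀ (norm_nonneg y) (hR y) 2, L.2]
  have hs_le : s / 2 ≤ R * (2 + G) := by
    nlinarith [norm_add_le x y, norm_sub_le x y, hR x, hR y,
      mul_le_mul_of_nonneg_left hgx₂ hR0, mul_le_mul_of_nonneg_left hy hR0]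
  have hZρ : ∀ᵐ ω ∂μ, ‖Z ω‖ ≤ R * ε := hZε.mono fun ω h => (hR _).trans (by gcongr)
  have hden : 1 - C * ε ≤ gauge K x - L * (s / 2) * (R * ε) := by
    nlinarith [mul_le_mul_of_nonneg_left hs_le (by positivity : (0 : ℝ) ≤ L * R * ε)]
  have hnum : gauge K y + L * ‖y‖ * (R * ε) ≤ gauge K y * (1 + A * ε) := by
    nlinarith [mul_le_mul_of_nonneg_left (hR y) (by positivity : (0 : ℝ) ≤ L * R * ε)]
  have hmain := smoothedGauge_add_add_smoothedGauge_sub_le hKc hK0 hsm hD hL hZ hZε hZρ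
    (by linarith : 0 < gauge K x - L * (s / 2) * (R * ε))
  have hfrac : 2 * D * (gauge K y + L * ‖y‖ * (R * ε)) ^ 2 /
      (gauge K x - L * (s / 2) * (R * ε)) ≤
        2 * gauge K y ^ 2 * (D * (1 + A * ε) ^ 2 / (1 - C * ε)) :=
    calc _ ≤ 2 * D * (gauge K y * (1 + A * ε)) ^ 2 / (1 - C * ε) := by
          gcongr
          linarith
      _ = _ := by ring
  have hNy : ((1 - ε) * gauge K y) ^ 2 ≤ smoothedGauge K μ Z y ^ 2 :=
    pow_le_pow_left₀ (mul_nonneg (by linarith) hγ) (hN y).1 2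
  calc _ ≤ 1 + gauge K y ^ 2 * (A * ε + D * (1 + A * ε) ^ 2 / (1 - C * ε)) := by
        linarith [mul_le_mul_of_nonneg_right hs_sub hε]
    _ ≤ 1 + gauge K y ^ 2 * (D * (1 + c * ε) * (1 - ε) ^ 2) := by gcongr
    _ = 1 + D * (1 + c * ε) * ((1 - ε) * gauge K y) ^ 2 := by ring
    _ ≤ _ := by gcongr

end Smoothing

/-- Randomized smoothing preserves `(2,D)`-smoothness of a gauge, up to a
`(1 + cε)` factor in the modulus: there are constants `c > 0` and `ε₀ > 0`, depending only
on the gauge and `D`, such that for every `ε ∈ (0, ε₀)`, any atomless random perturbation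
`Z` with `‖Z‖_K ≤ ε` a.s. whose smoothed gauge `‖x‖_ε = E‖x + ‖x‖₂·Z‖_K` approximates
`‖·‖_K` within factor `(1 ± ε)` yields a `(2, D(1+cε))`-smooth gauge `‖·‖_ε`. -/
theorem smoothing_preserves_two_smoothness
    {d : ℕ} (K : Set (EuclideanSpace ℝ (Fin d)))
    (hKcomp : IsCompact K) (hKconv : Convex ℝ K)
    (h0 : (0 : EuclideanSpace ℝ (Fin d)) ∈ interior K)
    (D : ℝ) (hD : 0 < D)
    (hsmooth : ∀ x : EuclideanSpace ℝ (Fin d), gauge K x = 1 →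
      ∀ y : EuclideanSpace ℝ (Fin d),
        (gauge K (x + y) + gauge K (x - y)) / 2 ≤ 1 + D * gauge K y ^ 2) :
    ∃ c > (0 : ℝ), ∃ ε₀ > (0 : ℝ), ∀ ε : ℝ, 0 < ε → ε < ε₀ →
      ∀ (Ω : Type) (_ : MeasurableSpace Ω) (μ : Measure Ω)
        (_ : IsProbabilityMeasure μ) (Z : Ω → EuclideanSpace ℝ (Fin d)),
        Measurable Z →
        (∀ z : EuclideanSpace ℝ (Fin d), μ (Z ⁻¹' {z}) = 0) →
        (∀ᵐ ω ∂μ, gauge K (Z ω) ≤ ε) →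
        ∀ normEps : EuclideanSpace ℝ (Fin d) → ℝ,
          (∀ x, normEps x = ∫ ω, gauge K (x + ‖x‖ • Z ω) ∂μ) →
          (∀ x, (1 - ε) * gauge K x ≤ normEps x ∧ normEps x ≤ (1 + ε) * gauge K x) →
          ∀ x : EuclideanSpace ℝ (Fin d), normEps x = 1 →
            ∀ y : EuclideanSpace ℝ (Fin d),
              (normEps (x + y) + normEps (x - y)) / 2
                ≤ 1 + D * (1 + c * ε) * normEps y ^ 2 := by
  have hK0 : K ∈ 𝓝 0 := mem_interior_iff_mem_nhds.1 h0
  have hK : Absorbent ℝ K := absorbent_nhds_zero hK0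
  obtain ⟨L, hL⟩ := hKconv.lipschitz_gauge hK0
  obtain ⟨R, hR0, hR⟩ := exists_norm_le_mul_gauge hKcomp.isBounded hK
  set G := max 1 ((8 + 3 * (1 + L * R)) / D)
  set C := 1 + L * R ^ 2 * (2 + G)
  have hC : 1 ≤ C := le_add_of_nonneg_right (by positivity)
  obtain ⟨c, hc, ε₁, hε₁, hcε⟩ :=
    exists_add_mul_sq_div_le (A := L * R ^ 2) (C := C) (by positivity) (by linarith) hD
  refine ⟨c, hc, min ε₁ (1 / (2 * C)), by positivity,
    fun ε hε hεε₀ Ω _ μ _ Z hZ _ hZε N hNdef hN x hx y => ?_⟩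
  obtain rfl : N = smoothedGauge K μ Z := funext hNdef
  have hCε : C * ε ≤ 1 / 2 := by
    have := (lt_min_iff.1 hεε₀).2
    rw [lt_div_iff₀ (by positivity)] at this
    linarith
  rcases le_or_gt (gauge K y) G with hy | hy
  · exact smoothedGauge_smoothness_ineq_of_gauge_le hKconv hK0 hsmooth hD.le hL hR hR0 hZ hZε
      hε.le hN hCε hc.le (hcε ε hε (lt_min_iff.1 hεε₀).1) hx hy
  · exact smoothness_ineq_of_large_gauge hKconv hK (gauge_neg_le_mul_gauge hL hR) hD.le hc.le
      hε.le (by nlinarith) hN hx ((le_max_left _ _).trans hy.le)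
      ((div_le_iff₀' hD).1 ((le_max_right _ _).trans hy.le))
end

section
/- Let K ⊆ ℝ^d be a convex body that is λ-strongly convex with respect to the Euclidean unit ball, and let g_1, …, g_T ∈ ℝ^d be gain vectors with ‖g_t‖₂ ≤ M for all t, whose partial sums s_t := g_1 + ⋯ + g_t satisfy the growth condition ‖s_t‖₂ ≥ tG for some G > 0 and all t ∈ {1,…,T}. Let x_1 be a maximizer of ⟨s_1, x⟩ over x ∈ K, and for each t ∈ {2,…,T} let x_t be a maximizer of ⟨s_{t−1}, x⟩ over x ∈ K. Then the regret satisfies max_{x∈K} Σ_{t=1}^T ⟨g_t, x⟩ − Σ_{t=1}^T ⟨g_t, x_t⟩ ≤ (M²/(2λG))·(1 + log T). -/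
/-!
If `K` is `λ`-strongly convex, then the maximizer `u` of `⟪w, ·⟫` over `K` beats every other
`v ∈ K` by at least `2λ‖w‖‖u - v‖²`: push the midpoint of `u` and `v` by `λ‖u - v‖²` in the
direction of `w`. Hence consecutive leaders `x_t`, `x_{t+1}` (maximizers for `s_{t-1}` and `s_t`)
satisfy `2λ‖s_{t-1}‖‖x_t - x_{t+1}‖² ≤ ⟪g_t, x_{t+1} - x_t⟫ ≤ M‖x_t - x_{t+1}‖`, so
`⟪g_t, x_{t+1} - x_t⟫ ≤ M²/(2λ‖s_{t-1}‖) ≤ M²/(2λG(t-1))`. By the be-the-leader lemma the regret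
of FTL is at most the sum of these differences, and the harmonic sum gives `1 + log T`.
-/

open Pointwise RealInnerProductSpace Finset

variable {E : Type*} [NormedAddCommGroup E] [InnerProductSpace ℝ E]

def IsStronglyConvexSet (lam : ℝ) (K : Set E) : Prop :=
  ∀ x ∈ K, ∀ y ∈ K, ({midpoint ℝ x y} : Set E) + (lam * ‖x - y‖ ^ 2) • Metric.closedBall 0 1 ⊆ K

namespace IsStronglyConvexSet

variable {lam : ℝ} {K : Set E}

theorem two_mul_norm_mul_sq_le_inner_sub (hK : IsStronglyConvexSet lam K) {w u v : E}
    (hu : u ∈ K) (hu_max : IsMaxOn (fun z => ⟪w, z⟫) K u) (hv : v ∈ K) :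
    2 * lam * ‖w‖ * ‖u - v‖ ^ 2 ≤ ⟪w, u⟫ - ⟪w, v⟫ := by
  rcases eq_or_ne w 0 with rfl | hw
  · simp
  set p := midpoint ℝ u v + (lam * ‖u - v‖ ^ 2) • (‖w‖⁻¹ • w)
  have hp : p ∈ K := hK u hu v hv <| Set.add_mem_add rfl <|
    Set.smul_mem_smul_set <| by simp [norm_smul, hw]
  have hwp : ⟪w, p⟫ = (⟪w, u⟫ + ⟪w, v⟫) / 2 + lam * ‖u - v‖ ^ 2 * ‖w‖ := by
    simp only [p, midpoint_eq_smul_add, inner_add_right, inner_smul_right,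
      real_inner_self_eq_norm_sq]
    field_simp
    simp only [invOf_eq_inv]
    ring
  have : ⟪w, p⟫ ≤ ⟪w, u⟫ := hu_max hp
  linarith

theorem inner_sub_inner_le_sq_div (hK : IsStronglyConvexSet lam K) (hlam : 0 < lam)
    {a g u v : E} {M r : ℝ} (hr : 0 < r) (hra : r ≤ ‖a‖) (hg : ‖g‖ ≤ M)
    (hu : u ∈ K) (hu_max : IsMaxOn (fun z => ⟪a, z⟫) K u)
    (hv : v ∈ K) (hv_max : IsMaxOn (fun z => ⟪a + g, z⟫) K v) :
    ⟪g, v⟫ - ⟪g, u⟫ ≤ M ^ 2 / (2 * lam * r) := by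
  set D := ‖u - v‖
  have hgap : 2 * lam * ‖a‖ * D ^ 2 ≤ ⟪g, v⟫ - ⟪g, u⟫ := by
    have hu_v := hK.two_mul_norm_mul_sq_le_inner_sub hu hu_max hv
    have hv_u : ⟪a + g, u⟫ ≤ ⟪a + g, v⟫ := hv_max hu
    simp only [inner_add_left] at hv_u
    linarith
  have hlip : ⟪g, v⟫ - ⟪g, u⟫ ≤ M * D :=
    calc ⟪g, v⟫ - ⟪g, u⟫ = ⟪g, v - u⟫ := (inner_sub_right _ _ _).symm
      _ ≤ ‖g‖ * ‖v - u‖ := real_inner_le_norm _ _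
      _ ≤ M * D := by rw [norm_sub_rev]; gcongr
  replace hgap : 2 * lam * r * D ^ 2 ≤ ⟪g, v⟫ - ⟪g, u⟫ := le_trans (by gcongr) hgap
  -- With `c = 2λr`: `2cE ≤ 2cMD ≤ M² + c²D² ≤ M² + cE`.
  have hc : 0 < 2 * lam * r := by positivity
  rw [le_div_iff₀ hc]
  nlinarith [sq_nonneg (M - 2 * lam * r * D), mul_le_mul_of_nonneg_left hlip hc.le,
    mul_le_mul_of_nonneg_left hgap hc.le]

end IsStronglyConvexSet

theorem inner_le_sum_inner_of_isMaxOn {K : Set E} {g s y : ℕ → E}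
    (hs : ∀ t, s t = ∑ i ∈ Icc 1 t, g i) {n : ℕ}
    (hy : ∀ t ∈ Icc 1 n, y t ∈ K ∧ IsMaxOn (fun z => ⟪s t, z⟫) K (y t)) :
    ∀ z ∈ K, ⟪s n, z⟫ ≤ ∑ t ∈ Icc 1 n, ⟪g t, y t⟫ := by
  induction n with
  | zero => simp [hs]
  | succ n ih =>
    intro z hz
    obtain ⟨hyK, hy_max⟩ := hy (n + 1) (by simp)
    have ih' := ih (fun t ht => hy t (Icc_subset_Icc_right n.le_succ ht)) _ hyK
    calc ⟪s (n + 1), z⟫ ≤ ⟪s (n + 1), y (n + 1)⟫ := hy_max hz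
      _ = ⟪s n, y (n + 1)⟫ + ⟪g (n + 1), y (n + 1)⟫ := by
        rw [hs, sum_Icc_succ_top (by omega), ← hs, inner_add_left]
      _ ≤ ∑ t ∈ Icc 1 (n + 1), ⟪g t, y t⟫ := by
        rw [sum_Icc_succ_top (by omega)]
        linarith

theorem sum_Icc_le_mul_harmonic {f : ℕ → ℝ} {C : ℝ} {n : ℕ} (h₁ : f 1 ≤ 0)
    (h : ∀ t ∈ Icc 1 n, f (t + 1) ≤ C / t) :
    ∑ t ∈ Icc 1 (n + 1), f t ≤ C * harmonic n := by
  induction n with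
  | zero => simpa using h₁
  | succ n ih =>
    rw [sum_Icc_succ_top (by omega), harmonic_succ]
    have := ih fun t ht => h t (Icc_subset_Icc_right n.le_succ ht)
    have := h (n + 1) (by simp)
    push_cast at this ⊢
    rw [mul_add, ← div_eq_mul_inv]
    linarith

theorem harmonic_le_one_add_log_succ (n : ℕ) : (harmonic n : ℝ) ≤ 1 + Real.log ↑(n + 1) := by
  refine (harmonic_le_one_add_log n).trans ?_
  rcases n.eq_zero_or_pos with rfl | hn
  · simp
  · gcongr
    omega

theorem ftl_regret_growth_condition_general
    {d : ℕ} (K : Set (EuclideanSpace ℝ (Fin d)))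
    (hKcomp : IsCompact K)
    (lam : ℝ) (hlam : 0 < lam)
    (hSC : ∀ x ∈ K, ∀ y ∈ K,
      ({midpoint ℝ x y} : Set (EuclideanSpace ℝ (Fin d)))
        + (lam * ‖x - y‖ ^ 2) • Metric.closedBall (0 : EuclideanSpace ℝ (Fin d)) 1 ⊆ K)
    (T : ℕ) (hT : 1 ≤ T)
    (M G : ℝ) (hG : 0 < G)
    (g : ℕ → EuclideanSpace ℝ (Fin d))
    (hM : ∀ t ∈ Finset.Icc 1 T, ‖g t‖ ≤ M)
    (s : ℕ → EuclideanSpace ℝ (Fin d))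
    (hsdef : ∀ t, s t = ∑ i ∈ Finset.Icc 1 t, g i)
    (hgrowth : ∀ t ∈ Finset.Icc 1 T, (t : ℝ) * G ≤ ‖s t‖)
    (x : ℕ → EuclideanSpace ℝ (Fin d))
    (hx1 : ∀ z ∈ K, ⟪s 1, z⟫ ≤ ⟪s 1, x 1⟫)
    (hxtK : ∀ t, 2 ≤ t → t ≤ T → x t ∈ K)
    (hxt : ∀ t, 2 ≤ t → t ≤ T → ∀ z ∈ K, ⟪s (t - 1), z⟫ ≤ ⟪s (t - 1), x t⟫) :
    ∀ z ∈ K,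
      ∑ t ∈ Finset.Icc 1 T, ⟪g t, z⟫ - ∑ t ∈ Finset.Icc 1 T, ⟪g t, x t⟫
        ≤ M ^ 2 / (2 * lam * G) * (1 + Real.log T) := by
  intro z hz
  obtain ⟨n, rfl⟩ : ∃ n, T = n + 1 := ⟨T - 1, by omega⟩
  obtain ⟨yT, hyTK, hyT_max⟩ :=
    hKcomp.exists_isMaxOn ⟨z, hz⟩ (f := fun v => ⟪s (n + 1), v⟫) (by fun_prop)
  have hx_lead : ∀ t ∈ Icc 1 n, x (t + 1) ∈ K ∧ IsMaxOn (fun z => ⟪s t, z⟫) K (x (t + 1)) :=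
    fun t ht => have := mem_Icc.mp ht
      ⟨hxtK (t + 1) (by omega) (by omega),
        isMaxOn_iff.mpr (by simpa using hxt (t + 1) (by omega) (by omega))⟩
  -- `y t` is the leader after round `t`, i.e. the point FTL plays in round `t + 1`.
  set y := Function.update (fun t => x (t + 1)) (n + 1) yT
  have hy : ∀ t ∈ Icc 1 (n + 1), y t ∈ K ∧ IsMaxOn (fun z => ⟪s t, z⟫) K (y t) := by
    intro t ht
    rcases eq_or_ne t (n + 1) with rfl | htn
    · simpa [y] using ⟨hyTK, hyT_max⟩
    · simpa [y, htn] using hx_lead t (by simp at ht ⊢; omega)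
  have hfirst : ⟪g 1, y 1⟫ - ⟪g 1, x 1⟫ ≤ 0 := by
    have : s 1 = g 1 := by simp [hsdef]
    linarith [this ▸ hx1 (y 1) (hy 1 (by simp)).1]
  have hstep : ∀ t ∈ Icc 1 n,
      ⟪g (t + 1), y (t + 1)⟫ - ⟪g (t + 1), x (t + 1)⟫ ≤ M ^ 2 / (2 * lam * G) / t := by
    intro t ht
    obtain ⟨hxK, hx_max⟩ := hx_lead t ht
    have ht' := mem_Icc.mp ht
    obtain ⟨hyK, hy_max⟩ := hy (t + 1) (by simp; omega)
    have hst : s (t + 1) = s t + g (t + 1) := by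
      rw [hsdef, sum_Icc_succ_top (by omega), ← hsdef]
    calc _ ≤ M ^ 2 / (2 * lam * (t * G)) :=
          IsStronglyConvexSet.inner_sub_inner_le_sq_div hSC hlam
            (mul_pos (by exact_mod_cast ht'.1) hG) (hgrowth t (by simp; omega))
            (hM _ (by simp; omega)) hxK hx_max hyK (hst ▸ hy_max)
      _ = M ^ 2 / (2 * lam * G) / t := by ring
  calc _ ≤ ∑ t ∈ Icc 1 (n + 1), (⟪g t, y t⟫ - ⟪g t, x t⟫) := by
        rw [sum_sub_distrib, ← sum_inner, ← hsdef]
        linarith [inner_le_sum_inner_of_isMaxOn hsdef hy z hz]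
    _ ≤ M ^ 2 / (2 * lam * G) * harmonic n := sum_Icc_le_mul_harmonic hfirst hstep
    _ ≤ M ^ 2 / (2 * lam * G) * (1 + Real.log ↑(n + 1)) := by
      gcongr
      exact harmonic_le_one_add_log_succ n

/-- (Huang et al.) Follow the Leader over a `λ`-strongly convex playing set
(w.r.t. the Euclidean unit ball), with gains bounded by `M` and partial sums satisfying the
growth condition `‖s_t‖₂ ≥ tG`, has regret at most `(M²/(2λG))·(1 + log T)`. -/
theorem ftl_regret_growth_condition
    {d : ℕ} (K : Set (EuclideanSpace ℝ (Fin d)))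
    (hKcomp : IsCompact K) (hKconv : Convex ℝ K) (hKint : (interior K).Nonempty)
    (lam : ℝ) (hlam : 0 < lam)
    (hSC : ∀ x ∈ K, ∀ y ∈ K,
      ({midpoint ℝ x y} : Set (EuclideanSpace ℝ (Fin d)))
        + (lam * ‖x - y‖ ^ 2) • Metric.closedBall (0 : EuclideanSpace ℝ (Fin d)) 1 ⊆ K)
    (T : ℕ) (hT : 1 ≤ T)
    (M G : ℝ) (hG : 0 < G)
    (g : ℕ → EuclideanSpace ℝ (Fin d))
    (hM : ∀ t ∈ Finset.Icc 1 T, ‖g t‖ ≤ M)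
    (s : ℕ → EuclideanSpace ℝ (Fin d))
    (hsdef : ∀ t, s t = ∑ i ∈ Finset.Icc 1 t, g i)
    (hgrowth : ∀ t ∈ Finset.Icc 1 T, (t : ℝ) * G ≤ ‖s t‖)
    (x : ℕ → EuclideanSpace ℝ (Fin d))
    (hx1K : x 1 ∈ K) (hx1 : ∀ z ∈ K, ⟪s 1, z⟫ ≤ ⟪s 1, x 1⟫)
    (hxtK : ∀ t, 2 ≤ t → t ≤ T → x t ∈ K)
    (hxt : ∀ t, 2 ≤ t → t ≤ T → ∀ z ∈ K, ⟪s (t - 1), z⟫ ≤ ⟪s (t - 1), x t⟫) :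
    ∀ z ∈ K,
      ∑ t ∈ Finset.Icc 1 T, ⟪g t, z⟫ - ∑ t ∈ Finset.Icc 1 T, ⟪g t, x t⟫
        ≤ M ^ 2 / (2 * lam * G) * (1 + Real.log T) :=
  ftl_regret_growth_condition_general K hKcomp lam hlam hSC T hT M G hG g hM s hsdef hgrowth x hx1
    hxtK hxt
end

section
/- Let ‖·‖ be a norm on ℝ^d. There is a constant C > 0 depending only on ‖·‖ such that the following holds. Let K ⊆ ℝ^d be a convex body that is λ-strongly convex with respect to ‖·‖, and let g_1, …, g_T ∈ ℝ^d be nonzero gain vectors with nonnegative coordinates (g_t ∈ ℝ^d₊) satisfying ‖g_t‖ ≤ M for all t. Let s_t := g_1 + ⋯ + g_t, let x_1 be a maximizer of ⟨s_1, x⟩ over x ∈ K, and for each t ∈ {2,…,T} let x_t be a maximizer of ⟨s_{t−1}, x⟩ over x ∈ K. Then for T ≥ 2 the regret satisfies max_{x∈K} Σ_{t=1}^T ⟨g_t, x⟩ − Σ_{t=1}^T ⟨g_t, x_t⟩ ≤ (C·M/λ)·log T. -/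
open Pointwise RealInnerProductSpace Finset

/-!
By be-the-leader, the regret of FTL is at most `∑ₜ ⟪gₜ, yₜ - xₜ⟫`, where `yₜ` maximizes
`⟪sₜ, ·⟫` and `xₜ` maximizes `⟪sₜ₋₁, ·⟫` over `K` (with `s₀ = 0`). Strong convexity makes every
maximizer of `⟪u, ·⟫` beat the rest of `K` by a quadratic margin proportional to `‖u‖`; comparing
the two maximizers gives `⟪gₜ, yₜ - xₜ⟫ ≲ ‖gₜ‖² / (λ ‖sₜ‖)`. For nonnegative gains
`‖sₜ‖ ≥ (‖g₁‖ + ⋯ + ‖gₜ‖) / √d`, and `∑ₜ bₜ² / (b₁ + ⋯ + bₜ) ≤ 2c log (1 + T)` whenever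
`0 ≤ bₜ ≤ c`, by comparison with the increments of `2c log (c + ·)`.
-/

namespace Seminorm

variable {E : Type*} [NormedAddCommGroup E] [NormedSpace ℝ E] [FiniteDimensional ℝ E]

theorem exists_le_mul_norm (n : Seminorm ℝ E) : ∃ β > 0, ∀ x, n x ≤ β * ‖x‖ :=
  n.bound_of_continuous_normedSpace n.convexOn.locallyLipschitz.continuous

theorem exists_mul_norm_le (n : Seminorm ℝ E) (hn : ∀ x, n x = 0 → x = 0) :
    ∃ α > 0, ∀ x, α * ‖x‖ ≤ n x := by
  rcases subsingleton_or_nontrivial E with hE | hE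
  · exact ⟨1, one_pos, fun x => by simp [Subsingleton.elim x 0]⟩
  obtain ⟨w, hw, hmin⟩ := (isCompact_sphere (0 : E) 1).exists_isMinOn
    (NormedSpace.sphere_nonempty.2 zero_le_one) n.convexOn.locallyLipschitz.continuous.continuousOn
  have hw1 : ‖w‖ = 1 := mem_sphere_zero_iff_norm.1 hw
  refine ⟨n w, (apply_nonneg n w).lt_of_ne fun h => by simp [hn w h.symm] at hw1, fun x => ?_⟩
  rcases eq_or_ne x 0 with rfl | hx
  · simp
  have hx' : 0 < ‖x‖ := norm_pos_iff.2 hx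
  have := hmin (show ‖x‖⁻¹ • x ∈ Metric.sphere 0 1 by simp [norm_smul, hx'.ne'])
  rw [Set.mem_ofPred_eq, map_smul_eq_mul, norm_inv, norm_norm, inv_mul_eq_div,
    le_div_iff₀ hx'] at this
  exact this

end Seminorm

theorem be_the_leader {α : Type*} {K : Set α} (f : ℕ → α → ℝ) (y : ℕ → α) (T : ℕ)
    (hy : ∀ t ∈ Icc 1 T, y t ∈ K ∧ IsMaxOn (fun z => ∑ i ∈ Icc 1 t, f i z) K (y t))
    {z : α} (hz : z ∈ K) :
    ∑ t ∈ Icc 1 T, f t z ≤ ∑ t ∈ Icc 1 T, f t (y t) := by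
  induction T generalizing z with
  | zero => simp
  | succ T ih =>
    obtain ⟨hyK, hymax⟩ := hy (T + 1) (right_mem_Icc.2 (by omega))
    calc ∑ t ∈ Icc 1 (T + 1), f t z ≤ ∑ t ∈ Icc 1 (T + 1), f t (y (T + 1)) := hymax hz
      _ = ∑ t ∈ Icc 1 T, f t (y (T + 1)) + f (T + 1) (y (T + 1)) := sum_Icc_succ_top (by omega) _
      _ ≤ ∑ t ∈ Icc 1 T, f t (y t) + f (T + 1) (y (T + 1)) := by
        grw [ih (fun t ht => hy t (Icc_subset_Icc_right (by omega) ht)) hyK]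
      _ = ∑ t ∈ Icc 1 (T + 1), f t (y t) := (sum_Icc_succ_top (by omega) _).symm

theorem sq_div_add_le_two_mul_log_sub {A b c : ℝ} (hA : 0 ≤ A) (hb : 0 ≤ b) (hbc : b ≤ c) :
    b ^ 2 / (A + b) ≤ 2 * c * (Real.log (c + A + b) - Real.log (c + A)) := by
  rcases hb.eq_or_lt with rfl | hb
  · simp
  have hcA : 0 < c + A := by linarith
  have hlog : b / (c + A + b) ≤ Real.log (c + A + b) - Real.log (c + A) := by
    have := Real.one_sub_inv_le_log_of_pos (div_pos (add_pos hcA hb) hcA)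
    rw [Real.log_div (by positivity) hcA.ne', inv_div] at this
    convert this using 1
    field_simp
    ring
  calc b ^ 2 / (A + b) ≤ 2 * c * (b / (c + A + b)) := by
        rw [mul_div_assoc', div_le_div_iff₀ (by positivity) (by positivity)]
        nlinarith [mul_nonneg (mul_nonneg hb.le (by linarith : (0:ℝ) ≤ c)) hA,
          mul_nonneg (mul_nonneg hb.le (by linarith : 0 ≤ A + b)) (sub_nonneg.2 hbc)]
    _ ≤ _ := by gcongr; linarith

theorem sum_sq_div_sum_le_two_mul_log_sub {b : ℕ → ℝ} {c : ℝ} (hb : ∀ t, 0 ≤ b t) (T : ℕ)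
    (hbc : ∀ t ∈ Icc 1 T, b t ≤ c) :
    ∑ t ∈ Icc 1 T, b t ^ 2 / ∑ i ∈ Icc 1 t, b i
      ≤ 2 * c * (Real.log (c + ∑ i ∈ Icc 1 T, b i) - Real.log c) := by
  induction T with
  | zero => simp
  | succ T ih =>
    rw [sum_Icc_succ_top (by omega), sum_Icc_succ_top (by omega), ← add_assoc]
    have := sq_div_add_le_two_mul_log_sub (sum_nonneg (s := Icc 1 T) fun i _ => hb i) (hb (T + 1))
      (hbc (T + 1) (right_mem_Icc.2 (by omega)))
    linarith [ih fun t ht => hbc t (Icc_subset_Icc_right (by omega) ht)]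

theorem sum_sq_div_sum_le_two_mul_log {b : ℕ → ℝ} {c : ℝ} (hc : 0 < c) (hb : ∀ t, 0 ≤ b t)
    (T : ℕ) (hbc : ∀ t ∈ Icc 1 T, b t ≤ c) :
    ∑ t ∈ Icc 1 T, b t ^ 2 / ∑ i ∈ Icc 1 t, b i ≤ 2 * c * Real.log (1 + T) := by
  have hB : ∑ i ∈ Icc 1 T, b i ≤ c * T := by
    simpa [mul_comm] using sum_le_card_nsmul _ _ _ hbc
  refine (sum_sq_div_sum_le_two_mul_log_sub hb T hbc).trans ?_
  have hB0 : 0 ≤ ∑ i ∈ Icc 1 T, b i := sum_nonneg fun i _ => hb i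
  rw [← Real.log_div (by positivity) hc.ne']
  gcongr
  rw [div_le_iff₀ hc]
  linarith

section StrongConvexity

variable {E : Type*} [NormedAddCommGroup E] [InnerProductSpace ℝ E]

def IsStronglyConvexWrt (n : Seminorm ℝ E) (lam : ℝ) (K : Set E) : Prop :=
  ∀ x ∈ K, ∀ y ∈ K, ({midpoint ℝ x y} : Set E) + (lam * n (x - y) ^ 2) • {z | n z ≤ 1} ⊆ K

variable {K : Set E} {p q a b : E}

theorem inner_sub_nonneg_of_isMaxOn (ha : a ∈ K) (hb : b ∈ K) (hpa : IsMaxOn (⟪p, ·⟫) K a)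
    (hqb : IsMaxOn (⟪q, ·⟫) K b) : 0 ≤ ⟪q - p, b - a⟫ := by
  have h1 : ⟪q, a⟫ ≤ ⟪q, b⟫ := hqb ha
  have h2 : ⟪p, b⟫ ≤ ⟪p, a⟫ := hpa hb
  simp only [inner_sub_left, inner_sub_right]
  linarith

namespace IsStronglyConvexWrt

variable {n : Seminorm ℝ E} {lam α β : ℝ} {u w : E}

theorem two_mul_inner_le_inner_sub (hK : IsStronglyConvexWrt n lam K) (ha : a ∈ K) (hb : b ∈ K)
    (hmax : IsMaxOn (⟪u, ·⟫) K a) (hw : n w ≤ 1) :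
    2 * lam * n (a - b) ^ 2 * ⟪u, w⟫ ≤ ⟪u, a - b⟫ := by
  have hmem := hK a ha b hb (Set.add_mem_add rfl (Set.smul_mem_smul_set hw))
  have := hmax hmem
  simp only [Set.mem_ofPred_eq, inner_add_right, real_inner_smul_right, midpoint_eq_smul_add,
    invOf_eq_inv, inner_sub_right] at this ⊢
  linarith

theorem two_mul_norm_le_inner_sub (hK : IsStronglyConvexWrt n lam K) (hβ : 0 < β)
    (hnβ : ∀ x, n x ≤ β * ‖x‖) (ha : a ∈ K) (hb : b ∈ K) (hmax : IsMaxOn (⟪u, ·⟫) K a) :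
    2 * lam * n (a - b) ^ 2 * ‖u‖ ≤ β * ⟪u, a - b⟫ := by
  rcases eq_or_ne u 0 with rfl | hu
  · simp
  have hβu : 0 < β * ‖u‖ := mul_pos hβ (norm_pos_iff.2 hu)
  have hw : n ((β * ‖u‖)⁻¹ • u) ≤ 1 := by
    rw [map_smul_eq_mul, norm_inv, Real.norm_of_nonneg hβu.le, inv_mul_le_one₀ hβu]
    exact hnβ u
  have := hK.two_mul_inner_le_inner_sub ha hb hmax hw
  rw [real_inner_smul_right, real_inner_self_eq_norm_sq] at this
  have hu' : β * ((β * ‖u‖)⁻¹ * ‖u‖ ^ 2) = ‖u‖ := by field_simp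
  calc 2 * lam * n (a - b) ^ 2 * ‖u‖
      = 2 * lam * n (a - b) ^ 2 * (β * ((β * ‖u‖)⁻¹ * ‖u‖ ^ 2)) := by rw [hu']
    _ = β * (2 * lam * n (a - b) ^ 2 * ((β * ‖u‖)⁻¹ * ‖u‖ ^ 2)) := by ring
    _ ≤ β * ⟪u, a - b⟫ := by gcongr

theorem inner_sub_mul_le (hK : IsStronglyConvexWrt n lam K) (hlam : 0 ≤ lam) (hα : 0 < α)
    (hαn : ∀ x, α * ‖x‖ ≤ n x) (hβ : 0 < β) (hnβ : ∀ x, n x ≤ β * ‖x‖) (ha : a ∈ K) (hb : b ∈ K)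
    (hpa : IsMaxOn (⟪p, ·⟫) K a) (hqb : IsMaxOn (⟪q, ·⟫) K b) :
    ⟪q - p, b - a⟫ * (2 * lam * α ^ 2 * ‖q‖) ≤ β * ‖q - p‖ ^ 2 := by
  set N := n (b - a)
  set r := ⟪q - p, b - a⟫
  have hr0 : 0 ≤ r := inner_sub_nonneg_of_isMaxOn ha hb hpa hqb
  have hq := hK.two_mul_norm_le_inner_sub hβ hnβ hb ha hqb
  have hp := hK.two_mul_norm_le_inner_sub hβ hnβ ha hb hpa
  rw [map_sub_rev] at hp
  have hr : 2 * lam * N ^ 2 * ‖q‖ ≤ β * r := by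
    have hsplit : r = ⟪q, b - a⟫ + ⟪p, a - b⟫ := by
      simp only [r, inner_sub_left, inner_sub_right]; ring
    have : 0 ≤ 2 * lam * N ^ 2 * ‖p‖ := by positivity
    rw [hsplit]
    linarith
  have hCS : α * r ≤ ‖q - p‖ * N := by
    calc α * r ≤ α * (‖q - p‖ * ‖b - a‖) := by gcongr; exact real_inner_le_norm _ _
      _ = ‖q - p‖ * (α * ‖b - a‖) := by ring
      _ ≤ ‖q - p‖ * N := by gcongr; exact hαn _
  rcases (show 0 ≤ N from apply_nonneg n _).eq_or_lt with hN | hN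
  · have : r ≤ 0 := by
      rw [← hN, mul_zero] at hCS
      exact nonpos_of_mul_nonpos_right hCS hα
    rw [le_antisymm this hr0, zero_mul]
    positivity
  refine le_of_mul_le_mul_right ?_ (pow_pos hN 2)
  calc r * (2 * lam * α ^ 2 * ‖q‖) * N ^ 2 = α ^ 2 * r * (2 * lam * N ^ 2 * ‖q‖) := by ring
    _ ≤ α ^ 2 * r * (β * r) := by gcongr
    _ = β * (α * r) ^ 2 := by ring
    _ ≤ β * (‖q - p‖ * N) ^ 2 := by gcongr
    _ = β * ‖q - p‖ ^ 2 * N ^ 2 := by ring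

end IsStronglyConvexWrt

end StrongConvexity

namespace EuclideanSpace

variable {ι : Type*} [Fintype ι]

theorem norm_le_sum_of_nonneg {x : EuclideanSpace ℝ ι} (hx : ∀ i, 0 ≤ x i) : ‖x‖ ≤ ∑ i, x i := by
  rw [EuclideanSpace.norm_eq, Real.sqrt_le_left (sum_nonneg fun i _ => hx i)]
  simpa [Real.norm_eq_abs, sq_abs] using sum_sq_le_sq_sum_of_nonneg fun i (_ : i ∈ univ) => hx i

theorem sum_le_sqrt_card_mul_norm (x : EuclideanSpace ℝ ι) :
    ∑ i, x i ≤ √(Fintype.card ι) * ‖x‖ := by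
  let one : EuclideanSpace ℝ ι := WithLp.toLp 2 fun _ => 1
  have h_inner : ⟪x, one⟫ = ∑ i, x i := by simp [one, PiLp.inner_apply]
  have h_norm : ‖one‖ = √(Fintype.card ι) := by simp [one, EuclideanSpace.norm_eq]
  have := real_inner_le_norm x one
  rw [h_inner, h_norm] at this
  linarith

theorem sum_norm_le_sqrt_card_mul_norm_sum {κ : Type*} (s : Finset κ)
    (g : κ → EuclideanSpace ℝ ι) (hg : ∀ k ∈ s, ∀ i, 0 ≤ g k i) :
    ∑ k ∈ s, ‖g k‖ ≤ √(Fintype.card ι) * ‖∑ k ∈ s, g k‖ :=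
  calc ∑ k ∈ s, ‖g k‖ ≤ ∑ k ∈ s, ∑ i, g k i :=
        sum_le_sum fun k hk => norm_le_sum_of_nonneg (hg k hk)
    _ = ∑ i, (∑ k ∈ s, g k) i := by rw [sum_comm]; simp [WithLp.ofLp_sum]
    _ ≤ _ := sum_le_sqrt_card_mul_norm _

end EuclideanSpace

section FollowTheLeader

variable {ι : Type*} [Fintype ι]

theorem IsStronglyConvexWrt.ftl_inner_sub_le {n : Seminorm ℝ (EuclideanSpace ℝ ι)}
    {lam α β : ℝ} {K : Set (EuclideanSpace ℝ ι)} (hK : IsStronglyConvexWrt n lam K)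
    (hlam : 0 < lam) (hα : 0 < α) (hαn : ∀ x, α * ‖x‖ ≤ n x) (hβ : 0 < β)
    (hnβ : ∀ x, n x ≤ β * ‖x‖) {g : ℕ → EuclideanSpace ℝ ι} {t : ℕ} (ht : 1 ≤ t)
    (hgt : g t ≠ 0) (hgnn : ∀ i ∈ Icc 1 t, ∀ j, 0 ≤ g i j) {a b : EuclideanSpace ℝ ι}
    (ha : a ∈ K) (hb : b ∈ K) (hpa : IsMaxOn (⟪∑ i ∈ Icc 1 (t - 1), g i, ·⟫) K a)
    (hqb : IsMaxOn (⟪∑ i ∈ Icc 1 t, g i, ·⟫) K b) :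
    ⟪g t, b - a⟫
      ≤ β * √(Fintype.card ι) / (2 * lam * α ^ 2) * (‖g t‖ ^ 2 / ∑ i ∈ Icc 1 t, ‖g i‖) := by
  have hgt_eq : ∑ i ∈ Icc 1 t, g i - ∑ i ∈ Icc 1 (t - 1), g i = g t := by
    obtain ⟨t, rfl⟩ := Nat.exists_eq_add_of_le' ht
    rw [sum_Icc_succ_top (by omega), Nat.add_sub_cancel, add_sub_cancel_left]
  have hstab := hK.inner_sub_mul_le hlam.le hα hαn hβ hnβ ha hb hpa hqb
  have hr0 := inner_sub_nonneg_of_isMaxOn ha hb hpa hqb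
  rw [hgt_eq] at hstab hr0
  have hL := EuclideanSpace.sum_norm_le_sqrt_card_mul_norm_sum _ _ hgnn
  have hLpos : 0 < ∑ i ∈ Icc 1 t, ‖g i‖ :=
    (norm_pos_iff.2 hgt).trans_le
      (single_le_sum (fun i _ => norm_nonneg (g i)) (mem_Icc.2 ⟨ht, le_rfl⟩))
  rw [div_mul_div_comm, le_div_iff₀ (by positivity)]
  calc ⟪g t, b - a⟫ * (2 * lam * α ^ 2 * ∑ i ∈ Icc 1 t, ‖g i‖)
      ≤ ⟪g t, b - a⟫ * (2 * lam * α ^ 2 * (√(Fintype.card ι) * ‖∑ i ∈ Icc 1 t, g i‖)) := by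
        gcongr
    _ = √(Fintype.card ι) * (⟪g t, b - a⟫ * (2 * lam * α ^ 2 * ‖∑ i ∈ Icc 1 t, g i‖)) := by
        ring
    _ ≤ √(Fintype.card ι) * (β * ‖g t‖ ^ 2) := by gcongr
    _ = β * √(Fintype.card ι) * ‖g t‖ ^ 2 := by ring

theorem IsStronglyConvexWrt.ftl_regret_le {n : Seminorm ℝ (EuclideanSpace ℝ ι)}
    {lam α β M : ℝ} {K : Set (EuclideanSpace ℝ ι)} (hKc : IsCompact K)
    (hK : IsStronglyConvexWrt n lam K) (hlam : 0 < lam) (hα : 0 < α) (hαn : ∀ x, α * ‖x‖ ≤ n x)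
    (hβ : 0 < β) (hnβ : ∀ x, n x ≤ β * ‖x‖) {T : ℕ} (hT : 2 ≤ T) {g : ℕ → EuclideanSpace ℝ ι}
    (hg0 : ∀ t ∈ Icc 1 T, g t ≠ 0) (hgnn : ∀ t ∈ Icc 1 T, ∀ j, 0 ≤ g t j)
    (hgM : ∀ t ∈ Icc 1 T, n (g t) ≤ M) {x : ℕ → EuclideanSpace ℝ ι}
    (hx : ∀ t ∈ Icc 1 T, x t ∈ K ∧ IsMaxOn (⟪∑ i ∈ Icc 1 (t - 1), g i, ·⟫) K (x t))
    {z : EuclideanSpace ℝ ι} (hz : z ∈ K) :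
    ∑ t ∈ Icc 1 T, ⟪g t, z⟫ - ∑ t ∈ Icc 1 T, ⟪g t, x t⟫
      ≤ 2 * β * √(Fintype.card ι) / α ^ 3 * M / lam * Real.log T := by
  have h1T : 1 ∈ Icc 1 T := mem_Icc.2 ⟨le_rfl, by omega⟩
  have hM : 0 < M :=
    (mul_pos hα (norm_pos_iff.2 (hg0 1 h1T))).trans_le ((hαn _).trans (hgM 1 h1T))
  choose y hyK hymax using fun t => hKc.exists_isMaxOn ⟨z, hz⟩
    (continuous_const.inner continuous_id : Continuous (⟪∑ i ∈ Icc 1 t, g i, ·⟫)).continuousOn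
  have hleader : ∑ t ∈ Icc 1 T, ⟪g t, z⟫ ≤ ∑ t ∈ Icc 1 T, ⟪g t, y t⟫ :=
    be_the_leader (fun t p => ⟪g t, p⟫) y T
      (fun t _ => ⟨hyK t, by simpa only [← sum_inner] using hymax t⟩) hz
  have hstep : ∀ t ∈ Icc 1 T, ⟪g t, y t - x t⟫
      ≤ β * √(Fintype.card ι) / (2 * lam * α ^ 2) * (‖g t‖ ^ 2 / ∑ i ∈ Icc 1 t, ‖g i‖) :=
    fun t ht => hK.ftl_inner_sub_le hlam hα hαn hβ hnβ (mem_Icc.1 ht).1 (hg0 t ht)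
      (fun i hi => hgnn i (Icc_subset_Icc_right (mem_Icc.1 ht).2 hi)) (hx t ht).1 (hyK t)
      (hx t ht).2 (hymax t)
  have hsum := sum_sq_div_sum_le_two_mul_log (div_pos hM hα) (fun t => norm_nonneg (g t)) T
    fun t ht => (le_div_iff₀' hα).2 ((hαn _).trans (hgM t ht))
  have hlog : Real.log (1 + T) ≤ 2 * Real.log T := by
    rw [← Real.log_rpow (by positivity)]
    gcongr
    norm_num
    nlinarith [(Nat.ofNat_le_cast.2 hT : (2 : ℝ) ≤ T)]
  calc ∑ t ∈ Icc 1 T, ⟪g t, z⟫ - ∑ t ∈ Icc 1 T, ⟪g t, x t⟫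
      ≤ ∑ t ∈ Icc 1 T, ⟪g t, y t - x t⟫ := by
        simp only [inner_sub_right, sum_sub_distrib]
        linarith
    _ ≤ β * √(Fintype.card ι) / (2 * lam * α ^ 2) *
          ∑ t ∈ Icc 1 T, ‖g t‖ ^ 2 / ∑ i ∈ Icc 1 t, ‖g i‖ := by
        rw [mul_sum]
        exact sum_le_sum hstep
    _ ≤ β * √(Fintype.card ι) / (2 * lam * α ^ 2) * (2 * (M / α) * (2 * Real.log T)) := by
        gcongr
        exact hsum.trans (by gcongr)
    _ = 2 * β * √(Fintype.card ι) / α ^ 3 * M / lam * Real.log T := by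
        field_simp

end FollowTheLeader

/-- There is a constant `C > 0`, depending only on the norm `n`, such that
Follow the Leader over any `λ`-strongly convex playing set (w.r.t. `n`), with nonzero
nonnegative gain vectors bounded by `M` in norm, has regret at most `(C·M/λ)·log T`
for `T ≥ 2`. -/
theorem ftl_regret_nonnegative_gains
    {d : ℕ} (n : Seminorm ℝ (EuclideanSpace ℝ (Fin d)))
    (hn : ∀ x, n x = 0 → x = 0) :
    ∃ C > (0 : ℝ),
      ∀ (K : Set (EuclideanSpace ℝ (Fin d))),
        IsCompact K → Convex ℝ K → (interior K).Nonempty →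
      ∀ lam : ℝ, 0 < lam →
      (∀ x ∈ K, ∀ y ∈ K,
        ({midpoint ℝ x y} : Set (EuclideanSpace ℝ (Fin d)))
          + (lam * (n (x - y)) ^ 2) • {z | n z ≤ 1} ⊆ K) →
      ∀ (M : ℝ) (T : ℕ), 2 ≤ T →
      ∀ g : ℕ → EuclideanSpace ℝ (Fin d),
        (∀ t ∈ Finset.Icc 1 T, g t ≠ 0) →
        (∀ t ∈ Finset.Icc 1 T, ∀ i : Fin d, 0 ≤ g t i) →
        (∀ t ∈ Finset.Icc 1 T, n (g t) ≤ M) →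
      ∀ s : ℕ → EuclideanSpace ℝ (Fin d),
        (∀ t, s t = ∑ i ∈ Finset.Icc 1 t, g i) →
      ∀ x : ℕ → EuclideanSpace ℝ (Fin d),
        x 1 ∈ K → (∀ z ∈ K, ⟪s 1, z⟫ ≤ ⟪s 1, x 1⟫) →
        (∀ t, 2 ≤ t → t ≤ T → x t ∈ K) →
        (∀ t, 2 ≤ t → t ≤ T → ∀ z ∈ K, ⟪s (t - 1), z⟫ ≤ ⟪s (t - 1), x t⟫) →
      ∀ z ∈ K,
        ∑ t ∈ Finset.Icc 1 T, ⟪g t, z⟫ - ∑ t ∈ Finset.Icc 1 T, ⟪g t, x t⟫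
          ≤ C * M / lam * Real.log T := by
  obtain ⟨α, hα, hαn⟩ := n.exists_mul_norm_le hn
  obtain ⟨β, hβ, hnβ⟩ := n.exists_le_mul_norm
  obtain rfl | hd := Nat.eq_zero_or_pos d
  · refine ⟨1, one_pos, fun K _ _ _ lam _ _ M T hT g hg0 => ?_⟩
    exact absurd (Subsingleton.elim _ _) (hg0 1 (mem_Icc.2 ⟨le_rfl, by omega⟩))
  refine ⟨2 * β * √d / α ^ 3, by positivity, ?_⟩
  intro K hKc _ _ lam hlam hK M T hT g hg0 hgnn hgM s hs x hx1 _ hxK hxmax z hz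
  obtain rfl : s = fun t => ∑ i ∈ Icc 1 t, g i := funext hs
  have hx : ∀ t ∈ Icc 1 T, x t ∈ K ∧ IsMaxOn (⟪∑ i ∈ Icc 1 (t - 1), g i, ·⟫) K (x t) := by
    intro t ht
    obtain rfl | ht2 := (mem_Icc.1 ht).1.eq_or_lt
    · simp [hx1, isMaxOn_const]
    · exact ⟨hxK t ht2 (mem_Icc.1 ht).2, hxmax t ht2 (mem_Icc.1 ht).2⟩
  simpa using IsStronglyConvexWrt.ftl_regret_le hKc hK hlam hα hαn hβ hnβ hT hg0 hgnn hgM hx hz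
end

section
/- Let a_1, …, a_T be real numbers in [0, A] with A > 0 and T ≥ 2, and set b_t := a_1 + ⋯ + a_t. If b_t > 0 for all t (equivalently, a_1 > 0, so that all the quotients are defined), then Σ_{t=1}^T a_t²/b_t ≤ 5A·log T. -/
/-- For reals `a_1,…,a_T ∈ [0,A]` with positive partial sums
`b_t = a_1 + ⋯ + a_t`, one has `Σ_{t=1}^T a_t²/b_t ≤ 5A·log T`. -/
theorem sum_sq_div_partial_sum_le
    (T : ℕ) (hT : 2 ≤ T) (A : ℝ) (hA : 0 < A) (a : ℕ → ℝ)
    (ha0 : ∀ t ∈ Finset.Icc 1 T, 0 ≤ a t)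
    (haA : ∀ t ∈ Finset.Icc 1 T, a t ≤ A)
    (b : ℕ → ℝ) (hb : ∀ t, b t = ∑ i ∈ Finset.Icc 1 t, a i)
    (hbpos : ∀ t ∈ Finset.Icc 1 T, 0 < b t) :
    ∑ t ∈ Finset.Icc 1 T, (a t) ^ 2 / b t ≤ 5 * A * Real.log T := by
  set f : ℕ → ℝ := fun t => Real.log (A + b t) with hf
  have hbnn : ∀ t, t ≤ T → 0 ≤ b t := by
    intro t ht
    rw [hb]
    apply Finset.sum_nonneg
    intro i hi
    obtain ⟨h1, h2⟩ := Finset.mem_Icc.mp hi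
    exact ha0 i (Finset.mem_Icc.mpr ⟨h1, le_trans h2 ht⟩)
  have hstep : ∀ t ∈ Finset.Icc 1 T, b t = b (t - 1) + a t := by
    intro t ht
    obtain ⟨h1, h2⟩ := Finset.mem_Icc.mp ht
    obtain ⟨s, rfl⟩ : ∃ s, t = s + 1 := ⟨t - 1, (Nat.succ_pred_eq_of_pos h1).symm⟩
    rw [hb, hb, Nat.add_sub_cancel, Finset.sum_Icc_succ_top (Nat.le_add_left 1 s)]
  have key : ∀ t ∈ Finset.Icc 1 T, a t ^ 2 / b t ≤ 2 * A * (f t - f (t - 1)) := by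
    intro t ht
    obtain ⟨h1, h2⟩ := Finset.mem_Icc.mp ht
    have hbt : 0 < b t := hbpos t ht
    have hbp : 0 ≤ b (t - 1) := hbnn _ (le_trans (Nat.sub_le t 1) h2)
    have hat0 : 0 ≤ a t := ha0 t ht
    have hatA : a t ≤ A := haA t ht
    have hrel : b t = b (t - 1) + a t := hstep t ht
    have h1' : 0 < A + b (t - 1) := by linarith
    have h2' : 0 < A + b t := by linarith
    have hlog : Real.log (A + b (t - 1)) - Real.log (A + b t)
        ≤ (A + b (t - 1)) / (A + b t) - 1 := by
      rw [← Real.log_div (ne_of_gt h1') (ne_of_gt h2')]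
      exact Real.log_le_sub_one_of_pos (div_pos h1' h2')
    have hquot : (A + b (t - 1)) / (A + b t) - 1 = -(a t / (A + b t)) := by
      field_simp
      linarith
    have hft : a t / (A + b t) ≤ f t - f (t - 1) := by
      simp only [hf]
      rw [hquot] at hlog
      linarith
    have hmain : a t ^ 2 / b t ≤ 2 * A * (a t / (A + b t)) := by
      rw [div_le_iff₀ hbt]
      have h3 : 2 * A * (a t / (A + b t)) = 2 * A * a t / (A + b t) := by ring
      rw [h3, div_mul_eq_mul_div, le_div_iff₀ h2']
      have habt : a t ≤ b t := by linarith
      nlinarith [mul_le_mul_of_nonneg_left habt (mul_nonneg hat0 hA.le),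
        mul_le_mul_of_nonneg_left hatA (mul_nonneg hat0 hbt.le)]
    calc a t ^ 2 / b t ≤ 2 * A * (a t / (A + b t)) := hmain
      _ ≤ 2 * A * (f t - f (t - 1)) := by
          apply mul_le_mul_of_nonneg_left hft
          linarith
  have htel : ∑ t ∈ Finset.Icc 1 T, (f t - f (t - 1)) = f T - f 0 := by
    rw [show Finset.Icc 1 T = Finset.Ico 1 (T + 1) by rw [Finset.Ico_add_one_right_eq_Icc],
      Finset.sum_Ico_eq_sum_range]
    have hc : ∀ i ∈ Finset.range (T + 1 - 1), f (1 + i) - f (1 + i - 1) = f (i + 1) - f i := by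
      intro i _
      congr 1 <;> · congr 1; omega
    rw [Finset.sum_congr rfl hc]
    have : T + 1 - 1 = T := by omega
    rw [this]
    exact Finset.sum_range_sub f T
  have hb0 : b 0 = 0 := by rw [hb]; simp
  have hbT : b T ≤ T * A := by
    rw [hb]
    calc ∑ i ∈ Finset.Icc 1 T, a i ≤ ∑ _i ∈ Finset.Icc 1 T, A :=
          Finset.sum_le_sum haA
      _ = T * A := by rw [Finset.sum_const, Nat.card_Icc]; simp [mul_comm]
  have hT2 : (2 : ℝ) ≤ (T : ℝ) := by exact_mod_cast hT
  have hlogT : 0 < Real.log T := Real.log_pos (by linarith)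
  have hfT : f T - f 0 ≤ 2 * Real.log T := by
    simp only [hf, hb0, add_zero]
    have h1 : A + b T ≤ A * (T : ℝ) ^ 2 := by nlinarith [hbnn T le_rfl]
    have h2 : Real.log (A + b T) ≤ Real.log (A * (T : ℝ) ^ 2) :=
      Real.log_le_log (by linarith [hbnn T le_rfl]) h1
    rw [Real.log_mul (ne_of_gt hA) (by positivity), Real.log_pow] at h2
    push_cast at h2
    linarith
  calc ∑ t ∈ Finset.Icc 1 T, (a t) ^ 2 / b t
      ≤ ∑ t ∈ Finset.Icc 1 T, 2 * A * (f t - f (t - 1)) := Finset.sum_le_sum key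
    _ = 2 * A * (f T - f 0) := by rw [← Finset.mul_sum, htel]
    _ ≤ 2 * A * (2 * Real.log T) := by
        apply mul_le_mul_of_nonneg_left hfT (by linarith)
    _ ≤ 5 * A * Real.log T := by nlinarith
end

section
/- Let C ⊆ ℝ^d be a convex body with the origin in its interior, and let K ⊆ ℝ^d be a convex body that is λ-strongly convex with respect to C. Then K is (λ/2)-non-midpoint strongly convex with respect to C: for every x, y ∈ K, every μ ∈ [0,1], and z := μx + (1−μ)y, the containment z + 2λ·μ(1−μ)·‖x−y‖_C²·C ⊆ K holds. -/
open Pointwise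

/-- If a convex body `K` is `λ`-strongly convex with respect to a convex
body `C` (with `0` in its interior), then `K` is `(λ/2)`-non-midpoint strongly convex with
respect to `C`: for all `x, y ∈ K`, `μ ∈ [0,1]` and `z = μx + (1−μ)y`,
`z + 2λ·μ(1−μ)·‖x−y‖_C²·C ⊆ K`. -/
theorem nonmidpoint_strong_convexity_of_strong_convexity
    {d : ℕ} (C K : Set (EuclideanSpace ℝ (Fin d)))
    (hCcomp : IsCompact C) (hCconv : Convex ℝ C)
    (hC0 : (0 : EuclideanSpace ℝ (Fin d)) ∈ interior C)
    (hKcomp : IsCompact K) (hKconv : Convex ℝ K) (hKint : (interior K).Nonempty)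
    (lam : ℝ) (hlam : 0 < lam)
    (hSC : ∀ x ∈ K, ∀ y ∈ K,
      ({midpoint ℝ x y} : Set (EuclideanSpace ℝ (Fin d)))
        + (lam * gauge C (x - y) ^ 2) • C ⊆ K) :
    ∀ x ∈ K, ∀ y ∈ K, ∀ μ : ℝ, 0 ≤ μ → μ ≤ 1 →
      ({μ • x + (1 - μ) • y} : Set (EuclideanSpace ℝ (Fin d)))
        + (2 * lam * (μ * (1 - μ)) * gauge C (x - y) ^ 2) • C ⊆ K := by
  intro x hx y hy μ hμ0 hμ1 v hv
  rw [Set.mem_add] at hv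
  obtain ⟨a, ha, b, hb, hab⟩ := hv
  rw [Set.mem_singleton_iff] at ha
  obtain ⟨c, hc, rfl⟩ := hb
  subst ha
  subst hab
  set p : EuclideanSpace ℝ (Fin d) :=
    midpoint ℝ x y + (lam * gauge C (x - y) ^ 2) • c with hp_def
  have hp : p ∈ K := by
    apply hSC x hx y hy
    exact Set.add_mem_add (Set.mem_singleton _) (Set.smul_mem_smul_set hc)
  have hcomb : μ ^ 2 • x + (1 - μ) ^ 2 • y + (2 * (μ * (1 - μ))) • p ∈ K := by
    have h01 : (0:ℝ) ≤ 1 - μ := by linarith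
    have := hKconv.sum_mem (t := (Finset.univ : Finset (Fin 3)))
      (w := ![μ ^ 2, (1 - μ) ^ 2, 2 * (μ * (1 - μ))]) (z := ![x, y, p])
      (fun i _ => by
        fin_cases i <;> simp <;> positivity)
      (by simp [Fin.sum_univ_three]; ring)
      (fun i _ => by fin_cases i <;> simpa using by first | exact hx | exact hy | exact hp)
    simpa [Fin.sum_univ_three] using this
  have heq : μ • x + (1 - μ) • y + (2 * lam * (μ * (1 - μ)) * gauge C (x - y) ^ 2) • c
      = μ ^ 2 • x + (1 - μ) ^ 2 • y + (2 * (μ * (1 - μ))) • p := by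
    rw [hp_def, midpoint_eq_smul_add]
    rw [invOf_eq_inv]
    match_scalars <;> ring
  rw [heq]
  exact hcomb
end
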